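/- arXiv:2403.19587 — 8 statements merged into one kernel-verified Lean document; each statement's English description precedes it below -/
import Mathlib

section
/- Suppose h satisfies assumption A1. Then for every λ > 0 and every v ∈ ℝ^d, |h_{λ,u}(v) − h(v)| ≤ C₁ λ^(1/2) N^(−p/2) (1 + |v|^(2(ℓ+1))), where C₁ = 2^(2ℓ+3) max{K², μ²} and K = 2L + |h(0)|. -/
set_option maxHeartbeats 1000000


open Real

/-- Property 2 for the uniformly tamed function: under A1,
`|h_{λ,u}(v) − h(v)| ≤ C₁ λ^{1/2} N^{-p/2} (1 + |v|^{2(ℓ+1)})` with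
`C₁ = 2^{2ℓ+3} max{K², μ²}` and `K = 2L + |h 0|`. -/
theorem stmt_4 (d : ℕ) (hd : 0 < d)
    (h : EuclideanSpace ℝ (Fin d) → EuclideanSpace ℝ (Fin d))
    (μ : ℝ) (hμ : 0 < μ) (N : ℕ) (hN : 0 < N) (p : ℝ) (hp : 0 < p)
    (L ℓ : ℝ) (hL : 0 < L) (hℓ : 0 < ℓ)
    (hA1 : ∀ v v' : EuclideanSpace ℝ (Fin d),
      ‖h v - h v'‖ ≤ L * (1 + ‖v‖ ^ ℓ + ‖v'‖ ^ ℓ) * ‖v - v'‖) :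
    ∀ lam : ℝ, 0 < lam → ∀ v : EuclideanSpace ℝ (Fin d),
      ‖((1 + Real.sqrt lam * (N : ℝ) ^ (-(p / 2)) * ‖h v - μ • v‖)⁻¹ • (h v - μ • v)
          + μ • v) - h v‖
        ≤ (2 : ℝ) ^ (2 * ℓ + 3) * max ((2 * L + ‖h 0‖) ^ 2) (μ ^ 2)
            * Real.sqrt lam * (N : ℝ) ^ (-(p / 2)) * (1 + ‖v‖ ^ (2 * (ℓ + 1))) := by
  intro lam hlam v
  set a : ℝ := Real.sqrt lam * (N : ℝ) ^ (-(p / 2)) with ha_def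
  have ha : 0 < a := by
    apply mul_pos (Real.sqrt_pos.mpr hlam)
    exact Real.rpow_pos_of_pos (by exact_mod_cast hN) _
  set g : EuclideanSpace ℝ (Fin d) := h v - μ • v with hg_def
  have hx : (0:ℝ) ≤ ‖v‖ := norm_nonneg _
  -- rewrite the LHS vector
  have hvec : (1 + a * ‖g‖)⁻¹ • g + μ • v - h v = ((1 + a * ‖g‖)⁻¹ - 1) • g := by
    rw [sub_smul, one_smul, hg_def]
    abel
  rw [hvec, norm_smul]
  set t : ℝ := a * ‖g‖ with ht_def
  have ht : 0 ≤ t := mul_nonneg ha.le (norm_nonneg _)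
  have h1t : 0 < 1 + t := by linarith
  have hcoef : |(1 + t)⁻¹ - 1| ≤ t := by
    rw [abs_sub_comm, abs_of_nonneg]
    · have : 1 - (1 + t)⁻¹ = t / (1 + t) := by field_simp; ring
      rw [this]
      exact div_le_self ht (by linarith)
    · have : (1 + t)⁻¹ ≤ 1 := by
        rw [inv_le_one_iff₀]; right; linarith
      linarith
  have hmain : |(1 + t)⁻¹ - 1| * ‖g‖ ≤ a * ‖g‖ ^ 2 := by
    have := mul_le_mul_of_nonneg_right hcoef (norm_nonneg g)
    calc |(1 + t)⁻¹ - 1| * ‖g‖ ≤ t * ‖g‖ := this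
      _ = a * ‖g‖ ^ 2 := by rw [ht_def]; ring
  -- now bound ‖g‖²
  have hA1' := hA1 v 0
  have hz : ‖(0 : EuclideanSpace ℝ (Fin d))‖ = 0 := norm_zero
  rw [hz, Real.zero_rpow hℓ.ne', sub_zero] at hA1'
  have hhv : ‖h v‖ ≤ L * (1 + ‖v‖ ^ ℓ + 0) * ‖v‖ + ‖h 0‖ := by
    have : ‖h v‖ ≤ ‖h v - h 0‖ + ‖h 0‖ := by
      calc ‖h v‖ = ‖(h v - h 0) + h 0‖ := by rw [sub_add_cancel]
        _ ≤ ‖h v - h 0‖ + ‖h 0‖ := norm_add_le _ _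
    linarith
  have hg_le : ‖g‖ ≤ ‖h v‖ + μ * ‖v‖ := by
    calc ‖g‖ ≤ ‖h v‖ + ‖μ • v‖ := norm_sub_le _ _
      _ = ‖h v‖ + μ * ‖v‖ := by rw [norm_smul, Real.norm_eq_abs, abs_of_pos hμ]
  have hpl : (0:ℝ) ≤ ‖v‖ ^ (ℓ + 1) := Real.rpow_nonneg hx _
  have h1 : ‖v‖ ≤ 1 + ‖v‖ ^ (ℓ + 1) := by
    rcases le_or_gt ‖v‖ 1 with hv1 | hv1
    · linarith
    · have := Real.rpow_le_rpow_of_exponent_le hv1.le (show (1:ℝ) ≤ ℓ + 1 by linarith)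
      rw [Real.rpow_one] at this
      linarith
  have h2 : ‖v‖ ^ ℓ * ‖v‖ = ‖v‖ ^ (ℓ + 1) := by
    rw [Real.rpow_add' hx (by linarith), Real.rpow_one]
  have hsq : (‖v‖ ^ (ℓ + 1)) ^ 2 = ‖v‖ ^ (2 * (ℓ + 1)) := by
    rw [show 2 * (ℓ + 1) = (ℓ + 1) * 2 by ring, Real.rpow_mul hx,
      show ((2:ℝ) : ℝ) = ((2:ℕ) : ℝ) by norm_num, Real.rpow_natCast]
  set K : ℝ := 2 * L + ‖h 0‖ with hK_def
  set M : ℝ := max (K ^ 2) (μ ^ 2) with hM_def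
  have hK0 : 0 ≤ K := by positivity
  have hKM : K ^ 2 ≤ M := le_max_left _ _
  have hμM : μ ^ 2 ≤ M := le_max_right _ _
  have hM0 : 0 ≤ M := le_trans (by positivity) hKM
  set A : ℝ := 1 + ‖v‖ ^ (ℓ + 1) with hA_def
  have hA1le : 1 ≤ A := by simp [hA_def]; linarith
  have hgA : ‖g‖ ≤ (K + μ) * A := by
    have hpow_nonneg : (0:ℝ) ≤ ‖v‖ ^ ℓ := Real.rpow_nonneg hx _
    have hh0 : (0:ℝ) ≤ ‖h 0‖ := norm_nonneg _
    nlinarith [hg_le, hhv, h1, h2, hK0, hμ.le, hL.le, hx]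
  have hg2 : ‖g‖ ^ 2 ≤ 8 * M * (1 + ‖v‖ ^ (2 * (ℓ + 1))) := by
    have hgsq : ‖g‖ ^ 2 ≤ ((K + μ) * A) ^ 2 := by
      nlinarith [norm_nonneg g, hgA, hK0, hμ.le, hA1le]
    have hAsq : A ^ 2 ≤ 2 * (1 + ‖v‖ ^ (2 * (ℓ + 1))) := by
      rw [← hsq]
      nlinarith [hpl, sq_nonneg (‖v‖ ^ (ℓ + 1) - 1)]
    have hKμ : (K + μ) ^ 2 ≤ 4 * M := by nlinarith [hKM, hμM, hK0, hμ.le]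
    nlinarith [hM0, hAsq, hKμ, sq_nonneg A, sq_nonneg (K + μ),
      Real.rpow_nonneg hx (2 * (ℓ + 1)), hA1le]
  have h8 : (8:ℝ) ≤ 2 ^ (2 * ℓ + 3) := by
    have hle := Real.rpow_le_rpow_of_exponent_le (show (1:ℝ) ≤ 2 by norm_num)
      (show (3:ℝ) ≤ 2 * ℓ + 3 by linarith)
    have h3 : (2:ℝ) ^ (3:ℝ) = 8 := by
      rw [show (3:ℝ) = ((3:ℕ) : ℝ) by norm_num, Real.rpow_natCast]; norm_num
    linarith
  have hC0 : (0:ℝ) < 2 ^ (2 * ℓ + 3) := Real.rpow_pos_of_pos (by norm_num) _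
  have hX0 : (0:ℝ) ≤ 1 + ‖v‖ ^ (2 * (ℓ + 1)) := by
    have := Real.rpow_nonneg hx (2 * (ℓ + 1)); linarith
  calc |(1 + t)⁻¹ - 1| * ‖g‖ ≤ a * ‖g‖ ^ 2 := hmain
    _ ≤ a * (8 * M * (1 + ‖v‖ ^ (2 * (ℓ + 1)))) := by
        exact mul_le_mul_of_nonneg_left hg2 ha.le
    _ ≤ a * (2 ^ (2 * ℓ + 3) * M * (1 + ‖v‖ ^ (2 * (ℓ + 1)))) := by
        apply mul_le_mul_of_nonneg_left _ ha.le
        apply mul_le_mul_of_nonneg_right _ hX0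
        exact mul_le_mul_of_nonneg_right h8 hM0
    _ = 2 ^ (2 * ℓ + 3) * M * Real.sqrt lam * (N : ℝ) ^ (-(p / 2))
          * (1 + ‖v‖ ^ (2 * (ℓ + 1))) := by
        rw [ha_def]; ring
end

section
/- Suppose h satisfies assumption A1. Then for every λ > 0 and every v ∈ ℝ^d, |h_{λ,c}(v) − h(v)| ≤ C₁ λ^(1/2) (1 + |v|^(2(ℓ+1))), where C₁ = 2^(2ℓ+3) max{K², μ²} and K = 2L + |h(0)|. -/
open Real

set_option maxHeartbeats 1000000

/-- Property 2 for the coordinate-wise tamed function: under A1,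
`|h_{λ,c}(v) − h(v)| ≤ C₁ λ^{1/2} (1 + |v|^{2(ℓ+1)})` with
`C₁ = 2^{2ℓ+3} max{K², μ²}` and `K = 2L + |h 0|`. -/
theorem stmt_5 (d : ℕ) (hd : 0 < d)
    (h : EuclideanSpace ℝ (Fin d) → EuclideanSpace ℝ (Fin d))
    (μ : ℝ) (hμ : 0 < μ)
    (L ℓ : ℝ) (hL : 0 < L) (hℓ : 0 < ℓ)
    (hA1 : ∀ v v' : EuclideanSpace ℝ (Fin d),
      ‖h v - h v'‖ ≤ L * (1 + ‖v‖ ^ ℓ + ‖v'‖ ^ ℓ) * ‖v - v'‖) :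
    ∀ lam : ℝ, 0 < lam → ∀ v : EuclideanSpace ℝ (Fin d),
      ‖(show EuclideanSpace ℝ (Fin d) from
            WithLp.toLp 2 (fun i => (h v i - μ * v i) / (1 + Real.sqrt lam * |h v i - μ * v i|)
              + μ * v i)) - h v‖
        ≤ (2 : ℝ) ^ (2 * ℓ + 3) * max ((2 * L + ‖h 0‖) ^ 2) (μ ^ 2)
            * Real.sqrt lam * (1 + ‖v‖ ^ (2 * (ℓ + 1))) := by
  intro lam hlam v
  set s := Real.sqrt lam with hs
  have hs0 : 0 < s := Real.sqrt_pos.mpr hlam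
  set r := ‖v‖ with hr
  have hr0 : 0 ≤ r := norm_nonneg v
  set K := 2 * L + ‖h 0‖ with hK
  have hK0 : 0 < K := by positivity
  set g : Fin d → ℝ := fun i => h v i - μ * v i with hg
  set G : EuclideanSpace ℝ (Fin d) := h v - μ • v with hGdef
  have hGi : ∀ i, G i = g i := fun i => rfl
  set M := max K μ with hMdef
  have hM0 : 0 < M := lt_of_lt_of_le hK0 (le_max_left _ _)
  have hMsq : max (K ^ 2) (μ ^ 2) = M ^ 2 := by
    rcases le_total K μ with hc | hc
    · rw [hMdef, max_eq_right hc, max_eq_right (pow_le_pow_left₀ hK0.le hc 2)]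
    · rw [hMdef, max_eq_left hc, max_eq_left (pow_le_pow_left₀ hμ.le hc 2)]
  set x := r ^ (ℓ + 1) with hxdef
  set y := r ^ (2 * (ℓ + 1)) with hydef
  have hx0 : 0 ≤ x := Real.rpow_nonneg hr0 _
  have hy0 : 0 ≤ y := Real.rpow_nonneg hr0 _
  have hx2 : x ^ 2 = y := by
    rw [hxdef, hydef, ← Real.rpow_natCast (r ^ (ℓ + 1)) 2, ← Real.rpow_mul hr0]
    norm_num; ring_nf
  -- coordinate-wise bound
  have key : ∀ i, |g i / (1 + s * |g i|) + μ * v i - h v i| ≤ s * (g i) ^ 2 := by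
    intro i
    have hD : (0:ℝ) < 1 + s * |g i| := by positivity
    have hD1 : (1:ℝ) ≤ 1 + s * |g i| := le_add_of_nonneg_right (by positivity)
    have heq : g i / (1 + s * |g i|) + μ * v i - h v i
        = -(s * (g i * |g i|)) / (1 + s * |g i|) := by
      have hgi : h v i = g i + μ * v i := by simp [hg]
      rw [hgi]; field_simp; ring
    rw [heq, abs_div, abs_of_pos hD, abs_neg, abs_mul, abs_mul, abs_abs,
      abs_of_pos hs0, abs_mul_abs_self, ← pow_two]
    exact div_le_self (by positivity) hD1
  have normG_sq : ‖G‖ ^ 2 = ∑ i, (g i) ^ 2 := by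
    rw [EuclideanSpace.norm_eq, Real.sq_sqrt (by positivity)]
    simp [hGi, Real.norm_eq_abs, sq_abs]
  -- bound on ‖G‖
  have hmul : r ^ ℓ * r = x := by
    rcases eq_or_lt_of_le hr0 with h0 | h0
    · rw [hxdef, ← h0, Real.zero_rpow (by positivity : ℓ + 1 ≠ 0),
        Real.zero_rpow hℓ.ne', zero_mul]
    · rw [hxdef, Real.rpow_add h0, Real.rpow_one]
  have hrle : r ≤ 1 + x := by
    rcases le_total r 1 with h1 | h1
    · linarith
    · have h2 := Real.rpow_le_rpow_of_exponent_le h1 (by linarith : (1:ℝ) ≤ ℓ + 1)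
      rw [Real.rpow_one] at h2
      linarith
  have hhv : ‖h v‖ ≤ L * (1 + r ^ ℓ) * r + ‖h 0‖ := by
    have hA := hA1 v 0
    rw [norm_zero, Real.zero_rpow hℓ.ne', sub_zero, add_zero] at hA
    calc ‖h v‖ = ‖(h v - h 0) + h 0‖ := by rw [sub_add_cancel]
      _ ≤ ‖h v - h 0‖ + ‖h 0‖ := norm_add_le _ _
      _ ≤ L * (1 + r ^ ℓ) * r + ‖h 0‖ := by linarith
  have hGle : ‖G‖ ≤ 2 * M * (1 + x) := by
    have h1 : ‖G‖ ≤ ‖h v‖ + μ * r := by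
      calc ‖G‖ ≤ ‖h v‖ + ‖μ • v‖ := norm_sub_le _ _
        _ = ‖h v‖ + μ * r := by rw [norm_smul, Real.norm_eq_abs, abs_of_pos hμ]
    have hKM : K ≤ M := le_max_left _ _
    have hμM : μ ≤ M := le_max_right _ _
    have hrx : 0 ≤ r ^ ℓ := Real.rpow_nonneg hr0 _
    have hh0 : 0 ≤ ‖h 0‖ := norm_nonneg _
    nlinarith [mul_le_mul_of_nonneg_left hrle hL.le, mul_le_mul_of_nonneg_left hrle hμ.le,
      mul_le_mul_of_nonneg_right hKM (by linarith : (0:ℝ) ≤ 1 + x),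
      mul_le_mul_of_nonneg_right hμM (by linarith : (0:ℝ) ≤ 1 + x)]
  have hGsq : ‖G‖ ^ 2 ≤ 8 * M ^ 2 * (1 + y) := by
    have h2 : ‖G‖ ^ 2 ≤ (2 * M * (1 + x)) ^ 2 :=
      pow_le_pow_left₀ (norm_nonneg _) hGle 2
    nlinarith [sq_nonneg (x - 1), sq_nonneg M, mul_nonneg (sq_nonneg M) (sq_nonneg (x - 1))]
  have h8 : (8:ℝ) ≤ 2 ^ (2 * ℓ + 3) := by
    have h3 : (2:ℝ) ^ (3:ℝ) ≤ 2 ^ (2 * ℓ + 3) :=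
      Real.rpow_le_rpow_of_exponent_le one_le_two (by linarith)
    have h4 : (2:ℝ) ^ (3:ℝ) = 8 := by
      rw [show (3:ℝ) = ((3:ℕ):ℝ) by norm_num, Real.rpow_natCast]; norm_num
    linarith
  -- main estimate
  suffices H : ∀ T : EuclideanSpace ℝ (Fin d),
      (∀ i, T i = g i / (1 + s * |g i|) + μ * v i) →
      ‖T - h v‖ ≤ 2 ^ (2 * ℓ + 3) * max (K ^ 2) (μ ^ 2) * s * (1 + y) by
    exact H _ (fun i => rfl)
  intro T hT
  have stepA : ‖T - h v‖ ≤ s * ‖G‖ ^ 2 := by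
    rw [EuclideanSpace.norm_eq]
    have hsum : ∑ i, ‖(T - h v) i‖ ^ 2 ≤ (s * ‖G‖ ^ 2) ^ 2 := by
      rw [normG_sq]
      calc ∑ i, ‖(T - h v) i‖ ^ 2
          ≤ ∑ i, (s * (g i) ^ 2) ^ 2 := by
            apply Finset.sum_le_sum
            intro i _
            have hTi : ‖(T - h v) i‖ = |g i / (1 + s * |g i|) + μ * v i - h v i| := by
              have : (T - h v) i = T i - h v i := rfl
              rw [this, hT i, Real.norm_eq_abs]
            rw [hTi]
            exact pow_le_pow_left₀ (abs_nonneg _) (key i) 2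
        _ = s ^ 2 * ∑ i, ((g i) ^ 2) ^ 2 := by
            rw [Finset.mul_sum]; congr 1; ext i; ring
        _ ≤ s ^ 2 * ((∑ i, (g i) ^ 2) * (∑ i, (g i) ^ 2)) := by
            apply mul_le_mul_of_nonneg_left _ (by positivity)
            calc ∑ i, ((g i) ^ 2) ^ 2 ≤ ∑ i, (g i) ^ 2 * (∑ j, (g j) ^ 2) := by
                  apply Finset.sum_le_sum
                  intro i _
                  rw [pow_two]
                  exact mul_le_mul_of_nonneg_left
                    (Finset.single_le_sum (fun j _ => sq_nonneg (g j)) (Finset.mem_univ i))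
                    (sq_nonneg _)
              _ = (∑ i, (g i) ^ 2) * (∑ i, (g i) ^ 2) := by rw [← Finset.sum_mul]
        _ = (s * ∑ i, (g i) ^ 2) ^ 2 := by ring
    calc Real.sqrt (∑ i, ‖(T - h v) i‖ ^ 2)
        ≤ Real.sqrt ((s * ‖G‖ ^ 2) ^ 2) := Real.sqrt_le_sqrt hsum
      _ = s * ‖G‖ ^ 2 := Real.sqrt_sq (by positivity)
  rw [hMsq]
  calc ‖T - h v‖ ≤ s * ‖G‖ ^ 2 := stepA
    _ ≤ s * (8 * M ^ 2 * (1 + y)) := mul_le_mul_of_nonneg_left hGsq hs0.le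
    _ ≤ 2 ^ (2 * ℓ + 3) * M ^ 2 * s * (1 + y) := by
        have hpos : (0:ℝ) ≤ M ^ 2 * s * (1 + y) := by positivity
        nlinarith [mul_le_mul_of_nonneg_right h8 hpos]
end

section
/- Suppose h satisfies assumption A2 with constant μ. Then for every λ > 0 and every v ∈ ℝ^d, the uniformly tamed function satisfies ⟨v, h_{λ,u}(v)⟩ ≥ (μ/2)|v|² − b, where b = |h(0)|²/(2μ). -/
open Real

/-- Property 3 for the uniformly tamed function: under A2,
`⟨v, h_{λ,u}(v)⟩ ≥ (μ/2)|v|² − b` with `b = |h 0|²/(2μ)`. -/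
theorem stmt_6 (d : ℕ) (hd : 0 < d)
    (h : EuclideanSpace ℝ (Fin d) → EuclideanSpace ℝ (Fin d))
    (N : ℕ) (hN : 0 < N) (p : ℝ) (hp : 0 < p)
    (μ : ℝ) (hμ : 0 < μ)
    (hA2 : ∀ v v' : EuclideanSpace ℝ (Fin d),
      inner ℝ (v - v') (h v - h v') ≥ μ * ‖v - v'‖ ^ 2) :
    ∀ lam : ℝ, 0 < lam → ∀ v : EuclideanSpace ℝ (Fin d),
      (inner ℝ v ((1 + Real.sqrt lam * (N : ℝ) ^ (-(p / 2)) * ‖h v - μ • v‖)⁻¹ • (h v - μ • v)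
          + μ • v) : ℝ)
        ≥ μ / 2 * ‖v‖ ^ 2 - ‖h 0‖ ^ 2 / (2 * μ) := by
  intro lam hlam v
  set c : ℝ := 1 + Real.sqrt lam * (N : ℝ) ^ (-(p / 2)) * ‖h v - μ • v‖ with hc
  have hc1 : (1 : ℝ) ≤ c := by
    have : 0 ≤ Real.sqrt lam * (N : ℝ) ^ (-(p / 2)) * ‖h v - μ • v‖ := by
      positivity
    rw [hc]; linarith
  have hcpos : 0 < c := lt_of_lt_of_le one_pos hc1
  have hcinv1 : c⁻¹ ≤ 1 := by
    rw [inv_le_one_iff₀]; right; exact hc1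
  have hcinvpos : 0 < c⁻¹ := inv_pos.mpr hcpos
  set a : ℝ := inner ℝ v (h v - μ • v) with ha
  have hA := hA2 v 0
  simp only [sub_zero] at hA
  have hinnerhv : (inner ℝ v (h v) : ℝ) - (inner ℝ v (h 0) : ℝ) ≥ μ * ‖v‖ ^ 2 := by
    rw [← inner_sub_right]; exact hA
  have hav : a = (inner ℝ v (h v) : ℝ) - μ * ‖v‖ ^ 2 := by
    rw [ha, inner_sub_right, real_inner_smul_right, real_inner_self_eq_norm_sq]
  have hcs : (inner ℝ v (h 0) : ℝ) ≥ -(‖v‖ * ‖h 0‖) := by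
    have := abs_real_inner_le_norm v (h 0)
    have := neg_abs_le (inner ℝ v (h 0) : ℝ)
    linarith
  have haub : a ≥ -(‖v‖ * ‖h 0‖) := by
    have : a ≥ (inner ℝ v (h 0) : ℝ) := by rw [hav]; linarith
    linarith
  have hexp : (inner ℝ v (c⁻¹ • (h v - μ • v) + μ • v) : ℝ)
      = c⁻¹ * a + μ * ‖v‖ ^ 2 := by
    rw [inner_add_right, real_inner_smul_right, real_inner_smul_right,
      real_inner_self_eq_norm_sq, ← ha]
  rw [hexp]
  have hamgm : ‖v‖ * ‖h 0‖ ≤ μ / 2 * ‖v‖ ^ 2 + ‖h 0‖ ^ 2 / (2 * μ) := by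
    have A : ‖h 0‖ ^ 2 / (2 * μ) * (2 * μ) = ‖h 0‖ ^ 2 := by field_simp
    nlinarith [sq_nonneg (μ * ‖v‖ - ‖h 0‖), hμ, sq_nonneg ‖v‖]
  rcases le_or_gt 0 a with hca | hca
  · have : 0 ≤ c⁻¹ * a := mul_nonneg hcinvpos.le hca
    have hb : 0 ≤ ‖h 0‖ ^ 2 / (2 * μ) := by positivity
    nlinarith [mul_nonneg hμ.le (sq_nonneg ‖v‖)]
  · have : c⁻¹ * a ≥ a := by nlinarith
    linarith
end

section
/- Suppose h satisfies the coordinate-wise dissipativity assumption A3-i with constant μ > 0. Then for every λ > 0 and every v ∈ ℝ^d, the coordinate-wise tamed function satisfies ⟨v, h_{λ,c}(v)⟩ ≥ (μ/2)|v|² − b, where b = |h(0)|²/(2μ). -/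
open Real

lemma key_coord (μ s x y z : ℝ) (hμ : 0 < μ) (hs : 0 ≤ s)
    (hxy : y * x ≥ μ / 2 * x ^ 2 - 1 / (2 * μ) * z ^ 2) :
    x * ((y - μ * x) / (1 + s * |y - μ * x|) + μ * x)
      ≥ μ / 2 * x ^ 2 - 1 / (2 * μ) * z ^ 2 := by
  set g := y - μ * x with hg
  have hD1 : (1 : ℝ) ≤ 1 + s * |g| := by
    have := mul_nonneg hs (abs_nonneg g); linarith
  have hD0 : (0 : ℝ) < 1 + s * |g| := by linarith
  have hxg : x * g ≥ -(μ / 2) * x ^ 2 - 1 / (2 * μ) * z ^ 2 := by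
    have : y * x = x * g + μ * x ^ 2 := by rw [hg]; ring
    nlinarith [hxy]
  have hrhs : -(μ / 2) * x ^ 2 - 1 / (2 * μ) * z ^ 2 ≤ 0 := by
    have h1 : 0 ≤ μ / 2 * x ^ 2 := by positivity
    have h2 : 0 ≤ 1 / (2 * μ) * z ^ 2 := by positivity
    linarith
  have hmain : x * g / (1 + s * |g|) ≥ -(μ / 2) * x ^ 2 - 1 / (2 * μ) * z ^ 2 := by
    rcases le_or_gt 0 (x * g) with hpos | hneg
    · have : 0 ≤ x * g / (1 + s * |g|) := div_nonneg hpos hD0.le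
      linarith
    · have : x * g ≤ x * g / (1 + s * |g|) := by
        rw [le_div_iff₀ hD0]
        nlinarith [hneg, hD1]
      linarith
  have : x * (g / (1 + s * |g|) + μ * x) = x * g / (1 + s * |g|) + μ * x ^ 2 := by
    ring
  rw [this]
  nlinarith [hmain]

/-- Property 3 for the coordinate-wise tamed function: under A3-i,
`⟨v, h_{λ,c}(v)⟩ ≥ (μ/2)|v|² − b` with `b = |h 0|²/(2μ)`. -/
theorem stmt_7 (d : ℕ) (hd : 0 < d)
    (h : EuclideanSpace ℝ (Fin d) → EuclideanSpace ℝ (Fin d))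
    (μ : ℝ) (hμ : 0 < μ)
    (hA3i : ∀ v : EuclideanSpace ℝ (Fin d), ∀ i : Fin d,
      h v i * v i ≥ μ / 2 * (v i) ^ 2 - 1 / (2 * μ) * (h 0 i) ^ 2) :
    ∀ lam : ℝ, 0 < lam → ∀ v : EuclideanSpace ℝ (Fin d),
      (inner ℝ v (show EuclideanSpace ℝ (Fin d) from WithLp.toLp 2
          fun i => (h v i - μ * v i) / (1 + Real.sqrt lam * |h v i - μ * v i|)
            + μ * v i) : ℝ)
        ≥ μ / 2 * ‖v‖ ^ 2 - ‖h 0‖ ^ 2 / (2 * μ) := by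
  have hnorm : ∀ x : EuclideanSpace ℝ (Fin d), ‖x‖ ^ 2 = ∑ i, (x i) ^ 2 := by
    intro x
    rw [← real_inner_self_eq_norm_sq, PiLp.inner_apply]
    simp [sq]
  intro lam hlam v
  rw [PiLp.inner_apply, hnorm v, hnorm (h 0)]
  simp only [RCLike.inner_apply, conj_trivial]
  have hsplit : μ / 2 * (∑ i, (v i) ^ 2) - (∑ i, (h 0 i) ^ 2) / (2 * μ)
      = ∑ i, (μ / 2 * (v i) ^ 2 - 1 / (2 * μ) * (h 0 i) ^ 2) := by
    rw [Finset.mul_sum, Finset.sum_div, ← Finset.sum_sub_distrib]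
    congr 1
    ext i
    ring
  rw [hsplit]
  apply Finset.sum_le_sum
  intro i _
  rw [mul_comm (_ : ℝ) (v i)]
  exact key_coord μ (Real.sqrt lam) (v i) (h v i) (h 0 i) hμ (Real.sqrt_nonneg lam)
    (hA3i v i)
end

section
/- The gradient of the Bayesian logistic regression potential U is locally Lipschitz with polynomial growth of order 2: for all v = (θ, x) and v' = (θ', x') in ℝ^d × ℝ^d, |∇U(v) − ∇U(v')| ≤ M (1 + |v|² + |v'|²) |v − v'|, where M = max(64/σ⁴, 8/σ² + (1/4)∑_{j=1}^{d^y} |u_j|²). -/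
open Real
noncomputable section
variable {d : ℕ}
abbrev Ee (d : ℕ) := EuclideanSpace ℝ (Fin d)
abbrev Vv (d : ℕ) := WithLp 2 (Ee d × Ee d)

def fstL (d : ℕ) : Vv d →L[ℝ] Ee d :=
  (ContinuousLinearMap.fst ℝ (Ee d) (Ee d)).comp
    (WithLp.prodContinuousLinearEquiv 2 ℝ (Ee d) (Ee d)).toContinuousLinearMap
def sndL (d : ℕ) : Vv d →L[ℝ] Ee d :=
  (ContinuousLinearMap.snd ℝ (Ee d) (Ee d)).comp
    (WithLp.prodContinuousLinearEquiv 2 ℝ (Ee d) (Ee d)).toContinuousLinearMap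
@[simp] lemma fstL_apply (v : Vv d) : fstL d v = v.fst := rfl
@[simp] lemma sndL_apply (v : Vv d) : sndL d v = v.snd := rfl
def Lj (d : ℕ) (j : Fin d) : Vv d →L[ℝ] ℝ := (EuclideanSpace.proj j).comp (sndL d - fstL d)
@[simp] lemma Lj_apply (j : Fin d) (v : Vv d) : Lj d j v = v.snd j - v.fst j := rfl
def Kj (d : ℕ) (u : Ee d) : Vv d →L[ℝ] ℝ := (innerSL ℝ u).comp (sndL d)
@[simp] lemma Kj_apply (u : Ee d) (v : Vv d) : Kj d u v = inner ℝ u v.snd := rfl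
def lgs (t : ℝ) : ℝ := Real.exp t / (1 + Real.exp t)

def gradVec (d dy : ℕ) (σ : ℝ) (y : Fin dy → ℝ) (u : Fin dy → Ee d) (v : Vv d) : Vv d :=
  (WithLp.equiv 2 (Ee d × Ee d)).symm
    ( (WithLp.equiv 2 ((_ : Fin d) → ℝ)).symm
        (fun j => -(4/σ^4 * (Lj d j v)^3 + 2/σ^2 * (Lj d j v))),
      (WithLp.equiv 2 ((_ : Fin d) → ℝ)).symm
        (fun j => 4/σ^4 * (Lj d j v)^3 + 2/σ^2 * (Lj d j v))
        + ∑ i, (lgs (Kj d (u i) v) - y i) • u i )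

lemma log_logistic (t : ℝ) :
    Real.log (Real.exp t / (1 + Real.exp t)) = t - Real.log (1 + Real.exp t) := by
  rw [Real.log_div (Real.exp_ne_zero t) (by positivity), Real.log_exp]

lemma log_logistic_neg (t : ℝ) :
    Real.log (Real.exp (-t) / (1 + Real.exp (-t))) = - Real.log (1 + Real.exp t) := by
  rw [log_logistic]
  have h : 1 + Real.exp (-t) = (1 + Real.exp t) * Real.exp (-t) := by
    rw [add_mul, one_mul, ← Real.exp_add]; simp [add_comm]
  rw [h, Real.log_mul (by positivity) (Real.exp_ne_zero _), Real.log_exp]; ring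

lemma hasDerivAt_softplus (t : ℝ) :
    HasDerivAt (fun t => Real.log (1 + Real.exp t)) (Real.exp t / (1 + Real.exp t)) t := by
  have h1 : HasDerivAt (fun t : ℝ => 1 + Real.exp t) (Real.exp t) t :=
    (Real.hasDerivAt_exp t).const_add 1
  simpa using h1.log (by positivity)

lemma le_of_sq_le_sq' {x y : ℝ} (hx : 0 ≤ x) (hy : 0 ≤ y) (h : x^2 ≤ y^2) : x ≤ y := by
  nlinarith [sq_nonneg (x - y), sq_nonneg (x + y)]

lemma euc_norm_sq (x : Ee d) : ‖x‖^2 = ∑ j, (x j)^2 := by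
  rw [PiLp.norm_sq_eq_of_L2]
  exact Finset.sum_congr rfl fun j _ => by rw [Real.norm_eq_abs, sq_abs]

lemma coord_sq_le (x : Ee d) (j : Fin d) : (x j)^2 ≤ ‖x‖^2 := by
  rw [euc_norm_sq]
  exact Finset.single_le_sum (fun i _ => sq_nonneg (x i)) (Finset.mem_univ j)

lemma cube_diff_bound (p q : ℝ) : |p^3 - q^3| ≤ (3/2) * (p^2 + q^2) * |p - q| := by
  have h : p^3 - q^3 = (p^2 + p*q + q^2) * (p - q) := by ring
  rw [h, abs_mul]
  have h2 : |p^2 + p*q + q^2| ≤ (3/2) * (p^2 + q^2) := by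
    rw [abs_le]; constructor <;> nlinarith [sq_nonneg (p+q), sq_nonneg (p-q)]
  exact mul_le_mul_of_nonneg_right h2 (abs_nonneg _)

lemma snd_norm_le (x : Vv d) : ‖x.snd‖ ≤ ‖x‖ := by
  have h := WithLp.prod_norm_sq_eq_of_L2 x
  exact le_of_sq_le_sq' (norm_nonneg _) (norm_nonneg _) (by nlinarith [sq_nonneg ‖x.fst‖])

lemma logistic_lipschitz (a b : ℝ) : |lgs a - lgs b| ≤ (1/4) * |a - b| := by
  have key : ∀ t : ℝ, HasDerivAt lgs (Real.exp t / (1 + Real.exp t) ^ 2) t := by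
    intro t
    have h1 := Real.hasDerivAt_exp t
    have h2 : HasDerivAt (fun t : ℝ => 1 + Real.exp t) (Real.exp t) t := h1.const_add 1
    have := h1.div h2 (by positivity)
    refine this.congr_deriv ?_
    rw [div_left_inj' (by positivity)]; ring
  have bnd : ∀ t : ℝ, ‖Real.exp t / (1 + Real.exp t) ^ 2‖ ≤ 1/4 := by
    intro t
    rw [Real.norm_eq_abs, abs_of_nonneg (by positivity), div_le_iff₀ (by positivity)]
    nlinarith [sq_nonneg (1 - Real.exp t), Real.exp_pos t]
  have := Convex.norm_image_sub_le_of_norm_hasDerivWithin_le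
    (fun t _ => (key t).hasDerivWithinAt) (fun t _ => bnd t) convex_univ
    (Set.mem_univ b) (Set.mem_univ a)
  simpa [Real.norm_eq_abs] using this

set_option maxHeartbeats 2000000 in
lemma hasGradientAt_U (dy : ℕ) (σ : ℝ) (hσ : 0 < σ) (y : Fin dy → ℝ)
    (u : Fin dy → Ee d) (v : Vv d) :
    HasGradientAt (fun v : Vv d =>
        (1/σ^4) * ∑ j, (Lj d j v)^4 + (1/σ^2) * ∑ j, (Lj d j v)^2
          - ∑ i, (y i * Kj d (u i) v - Real.log (1 + Real.exp (Kj d (u i) v))))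
      (gradVec d dy σ y u v) v := by
  have hA : ∀ j : Fin d, HasFDerivAt (fun v : Vv d => (Lj d j v)^4)
      (((4:ℝ) * (Lj d j v)^3) • (Lj d j)) v := fun j => by
    exact ((hasDerivAt_pow 4 (Lj d j v)).comp_hasFDerivAt v (Lj d j).hasFDerivAt).congr_fderiv (by simp)
  have hB : ∀ j : Fin d, HasFDerivAt (fun v : Vv d => (Lj d j v)^2)
      (((2:ℝ) * (Lj d j v)) • (Lj d j)) v := fun j => by
    exact ((hasDerivAt_pow 2 (Lj d j v)).comp_hasFDerivAt v (Lj d j).hasFDerivAt).congr_fderiv (by simp)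
  have hC : ∀ i : Fin dy, HasFDerivAt
      (fun v : Vv d => y i * Kj d (u i) v - Real.log (1 + Real.exp (Kj d (u i) v)))
      ((y i - lgs (Kj d (u i) v)) • (Kj d (u i))) v := fun i => by
    have h1 : HasFDerivAt (fun v : Vv d => y i * Kj d (u i) v)
        (y i • (Kj d (u i))) v := by
      simpa using (Kj d (u i)).hasFDerivAt.const_mul (y i)
    have h2 : HasFDerivAt (fun v : Vv d => Real.log (1 + Real.exp (Kj d (u i) v)))
        (lgs (Kj d (u i) v) • (Kj d (u i))) v :=
      (hasDerivAt_softplus (Kj d (u i) v)).comp_hasFDerivAt v (Kj d (u i)).hasFDerivAt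
    exact (h1.sub h2).congr_fderiv (sub_smul _ _ _).symm
  have hD : HasFDerivAt (fun v : Vv d =>
        (1/σ^4) * ∑ j, (Lj d j v)^4 + (1/σ^2) * ∑ j, (Lj d j v)^2
          - ∑ i, (y i * Kj d (u i) v - Real.log (1 + Real.exp (Kj d (u i) v))))
      ((1/σ^4) • ∑ j, ((4:ℝ) * (Lj d j v)^3) • (Lj d j)
        + (1/σ^2) • ∑ j, ((2:ℝ) * (Lj d j v)) • (Lj d j)
        - ∑ i, (y i - lgs (Kj d (u i) v)) • (Kj d (u i))) v := by
    exact (((HasFDerivAt.fun_sum (fun j _ => hA j)).const_mul (1/σ^4)).add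
      ((HasFDerivAt.fun_sum (fun j _ => hB j)).const_mul (1/σ^2))).sub
      (HasFDerivAt.fun_sum (fun i _ => hC i))
  rw [hasGradientAt_iff_hasFDerivAt]
  refine hD.congr_fderiv (Eq.symm ?_)
  apply ContinuousLinearMap.ext
  intro w
  simp only [InnerProductSpace.toDual_apply_apply, gradVec, WithLp.prod_inner_apply,
    ContinuousLinearMap.add_apply, ContinuousLinearMap.sub_apply,
    ContinuousLinearMap.smul_apply, ContinuousLinearMap.coe_sum', Finset.sum_apply,
    smul_eq_mul, Lj_apply, Kj_apply, WithLp.equiv_symm_apply, WithLp.ofLp_toLp, WithLp.ofLp_add, Pi.add_apply,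
    WithLp.ofLp_sum, WithLp.ofLp_smul, Pi.smul_apply, WithLp.fst, WithLp.snd,
    inner_add_left, sum_inner, real_inner_smul_left, PiLp.inner_apply,
    RCLike.inner_apply, conj_trivial]
  simp only [PiLp.smul_apply, smul_eq_mul, Finset.mul_sum, sub_eq_add_neg, ← add_assoc,
    ← Finset.sum_add_distrib, ← Finset.sum_neg_distrib]
  congr 1
  · exact Finset.sum_congr rfl fun j _ => by ring
  · exact Finset.sum_congr rfl fun i _ => Finset.sum_congr rfl fun k _ => by ring

set_option maxHeartbeats 2000000 in
lemma gradVec_lip (dy : ℕ) (σ : ℝ) (hσ : 0 < σ) (y : Fin dy → ℝ)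
    (u : Fin dy → Ee d) (v v' : Vv d) :
    ‖gradVec d dy σ y u v - gradVec d dy σ y u v'‖
      ≤ max (64 / σ ^ 4) (8 / σ ^ 2 + (1 / 4) * ∑ j : Fin dy, ‖u j‖ ^ 2)
          * (1 + ‖v‖ ^ 2 + ‖v'‖ ^ 2) * ‖v - v'‖ := by
  set S : ℝ := ∑ j : Fin dy, ‖u j‖ ^ 2 with hS
  have hS0 : 0 ≤ S := Finset.sum_nonneg fun _ _ => sq_nonneg _
  set M : ℝ := max (64 / σ ^ 4) (8 / σ ^ 2 + (1 / 4) * S) with hM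
  -- basic objects
  set a : Ee d := v.snd - v.fst with ha
  set a' : Ee d := v'.snd - v'.fst with ha'
  set Q : ℝ := ‖a‖^2 + ‖a'‖^2 with hQ
  set K : ℝ := 6/σ^4 * Q + 2/σ^2 with hK
  have hQ0 : 0 ≤ Q := by positivity
  have hK0 : 0 ≤ K := by positivity
  set w : Vv d := v - v' with hw
  set Δa : Ee d := a - a' with hΔa
  set Δc : Ee d := (WithLp.equiv 2 ((_ : Fin d) → ℝ)).symm
      (fun j => (4/σ^4 * (a j)^3 + 2/σ^2 * (a j)) - (4/σ^4 * (a' j)^3 + 2/σ^2 * (a' j))) with hΔc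
  set Δh : Ee d := ∑ i, (lgs (inner ℝ (u i) v.snd) - lgs (inner ℝ (u i) v'.snd)) • u i with hΔh
  -- decomposition
  have hfst : (gradVec d dy σ y u v - gradVec d dy σ y u v').fst = -Δc := by
    ext j
    show -(4/σ^4 * (v.snd j - v.fst j)^3 + 2/σ^2 * (v.snd j - v.fst j))
        - -(4/σ^4 * (v'.snd j - v'.fst j)^3 + 2/σ^2 * (v'.snd j - v'.fst j)) = _
    have h1 : a j = v.snd j - v.fst j := rfl
    have h2 : a' j = v'.snd j - v'.fst j := rfl
    show _ = -((4/σ^4 * (a j)^3 + 2/σ^2 * (a j)) - (4/σ^4 * (a' j)^3 + 2/σ^2 * (a' j)))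
    rw [h1, h2]; ring
  have hsnd : (gradVec d dy σ y u v - gradVec d dy σ y u v').snd = Δc + Δh := by
    have e1 : (gradVec d dy σ y u v - gradVec d dy σ y u v').snd
        = ((WithLp.equiv 2 ((_ : Fin d) → ℝ)).symm
            (fun j => 4/σ^4 * (Lj d j v)^3 + 2/σ^2 * (Lj d j v))
          - (WithLp.equiv 2 ((_ : Fin d) → ℝ)).symm
            (fun j => 4/σ^4 * (Lj d j v')^3 + 2/σ^2 * (Lj d j v')))
          + (∑ i, (lgs (Kj d (u i) v) - y i) • u i
            - ∑ i, (lgs (Kj d (u i) v') - y i) • u i) := by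
      show (_ + _) - (_ + _) = _
      abel
    rw [e1]
    have hB : (∑ i, (lgs (Kj d (u i) v) - y i) • u i
        - ∑ i, (lgs (Kj d (u i) v') - y i) • u i) = Δh := by
      rw [hΔh, ← Finset.sum_sub_distrib]
      refine Finset.sum_congr rfl fun i _ => ?_
      rw [← sub_smul]
      congr 1
      ring_nf
      rfl
    rw [hB]
    rfl
  -- coordinate bound for Δc
  have hcoord : ∀ j : Fin d, |Δc j| ≤ K * |Δa j| := by
    intro j
    have hj1 : Δc j = (4/σ^4 * (a j)^3 + 2/σ^2 * (a j))
        - (4/σ^4 * (a' j)^3 + 2/σ^2 * (a' j)) := rfl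
    have hj2 : Δa j = a j - a' j := rfl
    set p := a j; set q := a' j
    have hc := cube_diff_bound p q
    have hp : p^2 ≤ ‖a‖^2 := coord_sq_le a j
    have hq : q^2 ≤ ‖a'‖^2 := coord_sq_le a' j
    have e : Δc j = 4/σ^4 * (p^3 - q^3) + 2/σ^2 * (p - q) := by rw [hj1]; ring
    rw [e, hj2]
    calc |4/σ^4 * (p^3 - q^3) + 2/σ^2 * (p - q)|
        ≤ |4/σ^4 * (p^3 - q^3)| + |2/σ^2 * (p - q)| := abs_add_le _ _
      _ = 4/σ^4 * |p^3 - q^3| + 2/σ^2 * |p - q| := by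
          rw [abs_mul, abs_mul, abs_of_nonneg (by positivity : (0:ℝ) ≤ 4/σ^4),
            abs_of_nonneg (by positivity : (0:ℝ) ≤ 2/σ^2)]
      _ ≤ K * |p - q| := by
          have h4 : (0:ℝ) ≤ 4/σ^4 := by positivity
          have hpq : p^2 + q^2 ≤ Q := by rw [hQ]; exact add_le_add hp hq
          rw [hK]
          have hc' : 4/σ^4 * |p^3 - q^3| ≤ 6/σ^4 * (p^2+q^2) * |p - q| :=
            (mul_le_mul_of_nonneg_left hc h4).trans_eq (by ring)
          have h' : 6/σ^4 * (p^2+q^2) * |p - q| ≤ 6/σ^4 * Q * |p - q| :=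
            mul_le_mul_of_nonneg_right
              (mul_le_mul_of_nonneg_left hpq (by positivity)) (abs_nonneg _)
          calc 4/σ^4 * |p^3 - q^3| + 2/σ^2 * |p - q|
              ≤ 6/σ^4 * (p^2+q^2) * |p - q| + 2/σ^2 * |p - q| := by linarith
            _ ≤ 6/σ^4 * Q * |p - q| + 2/σ^2 * |p - q| := by linarith
            _ = (6/σ^4 * Q + 2/σ^2) * |p - q| := by ring
  -- ‖Δc‖ ≤ K ‖Δa‖
  have hΔcK : ‖Δc‖^2 ≤ K^2 * ‖Δa‖^2 := by
    rw [euc_norm_sq, euc_norm_sq, Finset.mul_sum]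
    refine Finset.sum_le_sum fun j _ => ?_
    have h2 := pow_le_pow_left₀ (abs_nonneg (Δc j)) (hcoord j) 2
    calc (Δc j)^2 = |Δc j|^2 := (sq_abs _).symm
      _ ≤ (K * |Δa j|)^2 := h2
      _ = K^2 * (Δa j)^2 := by rw [mul_pow, sq_abs]
  -- ‖Δa‖² ≤ 2 ‖w‖²
  have hΔaw : ‖Δa‖^2 ≤ 2 * ‖w‖^2 := by
    have e : Δa = w.snd - w.fst := by
      have e2 : w.snd = v.snd - v'.snd := rfl
      have e3 : w.fst = v.fst - v'.fst := rfl
      rw [hΔa, ha, ha', e2, e3]; abel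
    have h1 : ‖Δa‖ ≤ ‖w.snd‖ + ‖w.fst‖ := e ▸ norm_sub_le _ _
    have h2 := WithLp.prod_norm_sq_eq_of_L2 w
    nlinarith [norm_nonneg Δa, norm_nonneg w.fst, norm_nonneg w.snd, sq_nonneg (‖w.fst‖ - ‖w.snd‖)]
  -- Q ≤ 2(‖v‖² + ‖v'‖²)
  have hQb : Q ≤ 2 * (‖v‖^2 + ‖v'‖^2) := by
    have h1 : ‖a‖ ≤ ‖v.snd‖ + ‖v.fst‖ := norm_sub_le _ _
    have h1' : ‖a'‖ ≤ ‖v'.snd‖ + ‖v'.fst‖ := norm_sub_le _ _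
    have h2 := WithLp.prod_norm_sq_eq_of_L2 v
    have h2' := WithLp.prod_norm_sq_eq_of_L2 v'
    nlinarith [norm_nonneg a, norm_nonneg a', norm_nonneg v.fst, norm_nonneg v.snd,
      norm_nonneg v'.fst, norm_nonneg v'.snd, sq_nonneg (‖v.fst‖ - ‖v.snd‖), sq_nonneg (‖v'.fst‖ - ‖v'.snd‖)]
  -- ‖Δh‖ ≤ (S/4) ‖w‖
  have hΔhb : ‖Δh‖ ≤ (1/4) * S * ‖w‖ := by
    rw [hΔh]
    refine (norm_sum_le _ _).trans ?_
    have : ∀ i : Fin dy, ‖(lgs (inner ℝ (u i) v.snd) - lgs (inner ℝ (u i) v'.snd)) • u i‖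
        ≤ ((1/4) * ‖u i‖^2) * ‖w‖ := by
      intro i
      rw [norm_smul, Real.norm_eq_abs]
      have h1 : |lgs (inner ℝ (u i) v.snd) - lgs (inner ℝ (u i) v'.snd)|
          ≤ (1/4) * |(inner ℝ (u i) v.snd : ℝ) - inner ℝ (u i) v'.snd| := logistic_lipschitz _ _
      have h2 : |(inner ℝ (u i) v.snd : ℝ) - inner ℝ (u i) v'.snd| ≤ ‖u i‖ * ‖w‖ := by
        have e : (inner ℝ (u i) v.snd : ℝ) - inner ℝ (u i) v'.snd = inner ℝ (u i) w.snd := by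
          rw [hw]; rw [← inner_sub_right]; rfl
        rw [e]
        exact (abs_real_inner_le_norm _ _).trans
          (mul_le_mul_of_nonneg_left (snd_norm_le w) (norm_nonneg _))
      calc |lgs (inner ℝ (u i) v.snd) - lgs (inner ℝ (u i) v'.snd)| * ‖u i‖
          ≤ ((1/4) * (‖u i‖ * ‖w‖)) * ‖u i‖ := by
            refine mul_le_mul_of_nonneg_right (h1.trans ?_) (norm_nonneg _)
            nlinarith [abs_nonneg ((inner ℝ (u i) v.snd : ℝ) - inner ℝ (u i) v'.snd)]
        _ = ((1/4) * ‖u i‖^2) * ‖w‖ := by ring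
    refine (Finset.sum_le_sum fun i _ => this i).trans (le_of_eq ?_)
    rw [hS, Finset.mul_sum, Finset.sum_mul]
  clear_value S M a a' Q K w Δa Δc Δh
  -- assemble
  have hnorm : ‖gradVec d dy σ y u v - gradVec d dy σ y u v'‖^2 = ‖Δc‖^2 + ‖Δc + Δh‖^2 := by
    rw [WithLp.prod_norm_sq_eq_of_L2, hfst, hsnd, norm_neg]
  have hC2 : ‖Δc‖^2 ≤ 2 * K^2 * ‖w‖^2 := by nlinarith [sq_nonneg K]
  have hC : ‖Δc‖ ≤ 2 * K * ‖w‖ := by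
    refine le_of_sq_le_sq' (norm_nonneg _) (by positivity) ?_
    nlinarith [sq_nonneg (K * ‖w‖)]
  have hmain : ‖gradVec d dy σ y u v - gradVec d dy σ y u v'‖ ≤ 2 * K * ‖w‖ + (1/4) * S * ‖w‖ := by
    refine le_of_sq_le_sq' (norm_nonneg _) (by positivity) ?_
    rw [hnorm]
    have h1 : ‖Δc + Δh‖ ≤ ‖Δc‖ + ‖Δh‖ := norm_add_le _ _
    have hG : ‖Δc + Δh‖^2 ≤ (‖Δc‖ + ‖Δh‖)^2 := pow_le_pow_left₀ (norm_nonneg _) h1 2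
    have hH2 : ‖Δh‖^2 ≤ ((1/4)*S*‖w‖)^2 := pow_le_pow_left₀ (norm_nonneg _) hΔhb 2
    have hCH : ‖Δc‖ * ‖Δh‖ ≤ (2*K*‖w‖) * ((1/4)*S*‖w‖) :=
      mul_le_mul hC hΔhb (norm_nonneg _) (by positivity)
    nlinarith [hC2, hG, hH2, hCH]
  refine hmain.trans ?_
  have hMP : 2 * K + (1/4) * S ≤ M * (1 + ‖v‖^2 + ‖v'‖^2) := by
    have h64 : 64 / σ^4 ≤ M := by rw [hM]; exact le_max_left _ _
    have h8 : 8 / σ^2 + (1/4) * S ≤ M := by rw [hM]; exact le_max_right _ _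
    have hσ4 : 0 < σ^4 := by positivity
    have hσ2 : 0 < σ^2 := by positivity
    have hvv : 0 ≤ ‖v‖^2 + ‖v'‖^2 := by positivity
    have hKb : 2 * K ≤ 24/σ^4 * (‖v‖^2 + ‖v'‖^2) + 4/σ^2 := by
      rw [hK]
      have h12 : (0:ℝ) ≤ 12/σ^4 := by positivity
      have h' : 12/σ^4 * Q ≤ 24/σ^4 * (‖v‖^2 + ‖v'‖^2) :=
        (mul_le_mul_of_nonneg_left hQb h12).trans_eq (by ring)
      have e : 2 * (6/σ^4 * Q + 2/σ^2) = 12/σ^4 * Q + 4/σ^2 := by ring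
      rw [e]
      linarith
    have hM24 : 24/σ^4 ≤ M := by
      refine le_trans ?_ h64
      rw [div_le_div_iff₀ hσ4 hσ4]; nlinarith
    have h4S : 4/σ^2 + (1/4) * S ≤ M := by
      refine le_trans ?_ h8
      have h48 : (4:ℝ)/σ^2 ≤ 8/σ^2 := by
        rw [div_le_div_iff₀ hσ2 hσ2]; nlinarith
      linarith
    have hfin : 24/σ^4 * (‖v‖^2 + ‖v'‖^2) ≤ M * (‖v‖^2 + ‖v'‖^2) :=
      mul_le_mul_of_nonneg_right hM24 hvv
    calc 2 * K + (1/4) * S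
        ≤ (24/σ^4 * (‖v‖^2 + ‖v'‖^2) + 4/σ^2) + (1/4) * S := by linarith
      _ ≤ M * (‖v‖^2 + ‖v'‖^2) + M := by linarith
      _ = M * (1 + ‖v‖^2 + ‖v'‖^2) := by ring
  have hw0 : 0 ≤ ‖w‖ := norm_nonneg _
  calc 2 * K * ‖w‖ + (1/4) * S * ‖w‖ = (2 * K + (1/4) * S) * ‖w‖ := by ring
    _ ≤ M * (1 + ‖v‖^2 + ‖v'‖^2) * ‖w‖ := mul_le_mul_of_nonneg_right hMP hw0

end

set_option maxHeartbeats 1000000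

/-- The gradient of the Bayesian logistic regression potential with generalized Gaussian
prior is locally Lipschitz with quadratic growth:
`|∇U(v) − ∇U(v')| ≤ M (1 + |v|² + |v'|²) |v − v'|` with
`M = max(64/σ⁴, 8/σ² + (1/4)∑_j |u_j|²)`. -/
theorem stmt_9 (d dy : ℕ) (hd : 0 < d) (hdy : 0 < dy)
    (σ : ℝ) (hσ : 0 < σ)
    (y : Fin dy → ℝ) (hy : ∀ j, y j = 0 ∨ y j = 1)
    (u : Fin dy → EuclideanSpace ℝ (Fin d))
    (s : ℝ → ℝ) (hs : ∀ t, s t = Real.exp t / (1 + Real.exp t))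
    (U : WithLp 2 (EuclideanSpace ℝ (Fin d) × EuclideanSpace ℝ (Fin d)) → ℝ)
    (hU : ∀ v : WithLp 2 (EuclideanSpace ℝ (Fin d) × EuclideanSpace ℝ (Fin d)),
      U v =
        (1 / σ ^ 4) * ∑ j : Fin d,
            (((WithLp.equiv 2 _) v).2 j - ((WithLp.equiv 2 _) v).1 j) ^ 4
        + (1 / σ ^ 2) * ∑ j : Fin d,
            (((WithLp.equiv 2 _) v).2 j - ((WithLp.equiv 2 _) v).1 j) ^ 2
        - ∑ j : Fin dy,
            (y j * Real.log (s (inner ℝ (u j) ((WithLp.equiv 2 _) v).2))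
              + (1 - y j) * Real.log (s (-(inner ℝ (u j) ((WithLp.equiv 2 _) v).2 : ℝ))))) :
    ∀ v v' : WithLp 2 (EuclideanSpace ℝ (Fin d) × EuclideanSpace ℝ (Fin d)),
      ‖gradient U v - gradient U v'‖
        ≤ max (64 / σ ^ 4) (8 / σ ^ 2 + (1 / 4) * ∑ j : Fin dy, ‖u j‖ ^ 2)
            * (1 + ‖v‖ ^ 2 + ‖v'‖ ^ 2) * ‖v - v'‖ := by
  have hU' : U = fun v : Vv d =>
      (1/σ^4) * ∑ j, (Lj d j v)^4 + (1/σ^2) * ∑ j, (Lj d j v)^2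
        - ∑ i, (y i * Kj d (u i) v - Real.log (1 + Real.exp (Kj d (u i) v))) := by
    funext v
    rw [hU v]
    have hterm : ∀ i : Fin dy,
        y i * Real.log (s (inner ℝ (u i) ((WithLp.equiv 2 _) v).2))
          + (1 - y i) * Real.log (s (-(inner ℝ (u i) ((WithLp.equiv 2 _) v).2 : ℝ)))
        = y i * Kj d (u i) v - Real.log (1 + Real.exp (Kj d (u i) v)) := by
      intro i
      rw [hs, hs, log_logistic, log_logistic_neg]
      have e : Kj d (u i) v = (inner ℝ (u i) ((WithLp.equiv 2 _) v).2 : ℝ) := rfl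
      rw [e]; ring
    congr 1
    exact Finset.sum_congr rfl fun i _ => hterm i
  intro v v'
  have hgv : HasGradientAt U (gradVec d dy σ y u v) v := by
    have h := hasGradientAt_U dy σ hσ y u v
    rw [← hU'] at h; exact h
  have hgv' : HasGradientAt U (gradVec d dy σ y u v') v' := by
    have h := hasGradientAt_U dy σ hσ y u v'
    rw [← hU'] at h; exact h
  rw [hgv.gradient, hgv'.gradient]
  exact gradVec_lip dy σ hσ y u v v'
end

section
/- The gradient of the potential W(θ, x) = |x|^{4m} + (|x|^{2m} + 1)(|θ|^{2m} + 1) + |θ|^{4m} satisfies: for all v, v' ∈ ℝ^{d^θ} × ℝ^{d^x}, |∇W(v) − ∇W(v')| ≤ 2m·2^{4m} (1 + |v|^{4m−2} + |v'|^{4m−2}) |v − v'|. -/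
set_option maxHeartbeats 1000000
set_option maxRecDepth 8000
open InnerProductSpace
noncomputable section
variable {F G : Type*} [NormedAddCommGroup F] [InnerProductSpace ℝ F]
  [NormedAddCommGroup G] [InnerProductSpace ℝ G]

def Pfst : WithLp 2 (F × G) →L[ℝ] F :=
  (ContinuousLinearMap.fst ℝ F G).comp
    (WithLp.prodContinuousLinearEquiv 2 ℝ F G).toContinuousLinearMap

def Psnd : WithLp 2 (F × G) →L[ℝ] G :=
  (ContinuousLinearMap.snd ℝ F G).comp
    (WithLp.prodContinuousLinearEquiv 2 ℝ F G).toContinuousLinearMap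

@[simp] lemma Pfst_apply (w : WithLp 2 (F × G)) : Pfst w = w.fst := rfl
@[simp] lemma Psnd_apply (w : WithLp 2 (F × G)) : Psnd w = w.snd := rfl

def gradW (k : ℕ) (v : WithLp 2 (F × G)) : WithLp 2 (F × G) :=
  (WithLp.equiv 2 (F × G)).symm
    ( ((2 * (k+1) : ℝ) * ((‖v.snd‖ ^ (2*k+2) + 1) * ‖v.fst‖ ^ (2*k) + 2 * ‖v.fst‖ ^ (4*k+2))) • v.fst,
      ((2 * (k+1) : ℝ) * ((‖v.fst‖ ^ (2*k+2) + 1) * ‖v.snd‖ ^ (2*k) + 2 * ‖v.snd‖ ^ (4*k+2))) • v.snd )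

lemma hasGradientAt_W [CompleteSpace F] [CompleteSpace G] (k : ℕ) (v : WithLp 2 (F × G)) :
    HasGradientAt (fun w : WithLp 2 (F × G) =>
        ‖w.snd‖ ^ (4*(k+1)) + (‖w.snd‖ ^ (2*(k+1)) + 1) * (‖w.fst‖ ^ (2*(k+1)) + 1)
          + ‖w.fst‖ ^ (4*(k+1)))
      (gradW k v) v := by
  have hf : HasFDerivAt (fun w : WithLp 2 (F × G) => (inner ℝ (Pfst w) (Pfst w) : ℝ))
      ((fderivInnerCLM ℝ (Pfst v, Pfst v)).comp ((Pfst (F := F) (G := G)).prod Pfst)) v :=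
    HasFDerivAt.inner ℝ (ContinuousLinearMap.hasFDerivAt (Pfst (F:=F) (G:=G)))
      (ContinuousLinearMap.hasFDerivAt (Pfst (F:=F) (G:=G)))
  have hs : HasFDerivAt (fun w : WithLp 2 (F × G) => (inner ℝ (Psnd w) (Psnd w) : ℝ))
      ((fderivInnerCLM ℝ (Psnd v, Psnd v)).comp ((Psnd (F := F) (G := G)).prod Psnd)) v :=
    HasFDerivAt.inner ℝ (ContinuousLinearMap.hasFDerivAt (Psnd (F:=F) (G:=G)))
      (ContinuousLinearMap.hasFDerivAt (Psnd (F:=F) (G:=G)))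
  set Df := (fderivInnerCLM ℝ (Pfst v, Pfst v)).comp ((Pfst (F := F) (G := G)).prod Pfst) with hDf
  set Ds := (fderivInnerCLM ℝ (Psnd v, Psnd v)).comp ((Psnd (F := F) (G := G)).prod Psnd) with hDs
  have hf2 : HasFDerivAt (fun w : WithLp 2 (F × G) => ‖w.fst‖ ^ 2) Df v := by
    have e : (fun w : WithLp 2 (F × G) => (inner ℝ (Pfst w) (Pfst w) : ℝ))
        = fun w => ‖w.fst‖ ^ 2 := funext fun w => by
      rw [real_inner_self_eq_norm_sq, Pfst_apply]
    rwa [e] at hf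
  have hs2 : HasFDerivAt (fun w : WithLp 2 (F × G) => ‖w.snd‖ ^ 2) Ds v := by
    have e : (fun w : WithLp 2 (F × G) => (inner ℝ (Psnd w) (Psnd w) : ℝ))
        = fun w => ‖w.snd‖ ^ 2 := funext fun w => by
      rw [real_inner_self_eq_norm_sq, Psnd_apply]
    rwa [e] at hs
  have hfp : ∀ n : ℕ, HasFDerivAt (fun w : WithLp 2 (F × G) => (‖w.fst‖ ^ 2) ^ n)
      (((n : ℝ) * (‖v.fst‖ ^ 2) ^ (n-1)) • Df) v := fun n =>
    (hasDerivAt_pow n (‖v.fst‖ ^ 2)).comp_hasFDerivAt v hf2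
  have hsp : ∀ n : ℕ, HasFDerivAt (fun w : WithLp 2 (F × G) => (‖w.snd‖ ^ 2) ^ n)
      (((n : ℝ) * (‖v.snd‖ ^ 2) ^ (n-1)) • Ds) v := fun n =>
    (hasDerivAt_pow n (‖v.snd‖ ^ 2)).comp_hasFDerivAt v hs2
  have hW' := ((hsp (2*(k+1))).add ((((hsp (k+1)).add_const 1).mul
      ((hfp (k+1)).add_const 1)))).add (hfp (2*(k+1)))
  rw [hasGradientAt_iff_hasFDerivAt]
  have hfun : (fun w : WithLp 2 (F × G) =>
        ‖w.snd‖ ^ (4*(k+1)) + (‖w.snd‖ ^ (2*(k+1)) + 1) * (‖w.fst‖ ^ (2*(k+1)) + 1)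
          + ‖w.fst‖ ^ (4*(k+1)))
      = (fun w : WithLp 2 (F × G) =>
        (‖w.snd‖ ^ 2) ^ (2*(k+1)) + ((‖w.snd‖ ^ 2) ^ (k+1) + 1) * ((‖w.fst‖ ^ 2) ^ (k+1) + 1)
          + (‖w.fst‖ ^ 2) ^ (2*(k+1))) := by
    funext w
    rw [← pow_mul, ← pow_mul, ← pow_mul, ← pow_mul]
    have e1 : 2 * (2*(k+1)) = 4 * (k+1) := by ring
    have e2 : 2 * (k+1) = 2 * (k+1) := rfl
    rw [e1]
  rw [hfun]
  refine hW'.congr_fderiv ?_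
  apply ContinuousLinearMap.ext
  intro w
  have efst : (gradW k v).fst
      = ((2 * (k+1) : ℝ) * ((‖v.snd‖ ^ (2*k+2) + 1) * ‖v.fst‖ ^ (2*k) + 2 * ‖v.fst‖ ^ (4*k+2))) • v.fst := rfl
  have esnd : (gradW k v).snd
      = ((2 * (k+1) : ℝ) * ((‖v.fst‖ ^ (2*k+2) + 1) * ‖v.snd‖ ^ (2*k) + 2 * ‖v.snd‖ ^ (4*k+2))) • v.snd := rfl
  have e1 : (2*(k+1) : ℕ) - 1 = 2*k+1 := by omega
  have e2 : (k+1 : ℕ) - 1 = k := by omega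
  rw [toDual_apply_apply, WithLp.prod_inner_apply]
  change _ = inner ℝ (gradW k v).fst w.fst + inner ℝ (gradW k v).snd w.snd
  rw [efst, esnd, real_inner_smul_left, real_inner_smul_left]
  simp only [e1, e2, ContinuousLinearMap.add_apply, ContinuousLinearMap.coe_smul', Pi.smul_apply,
    hDf, hDs, ContinuousLinearMap.comp_apply, ContinuousLinearMap.prod_apply, fderivInnerCLM_apply,
    Pfst_apply, Psnd_apply, smul_eq_mul]
  rw [real_inner_comm w.fst v.fst, real_inner_comm w.snd v.snd]
  rw [show ((‖v.fst‖^2)^(2*k+1) : ℝ) = ‖v.fst‖^(4*k+2) by rw [← pow_mul]; ring_nf,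
      show ((‖v.snd‖^2)^(2*k+1) : ℝ) = ‖v.snd‖^(4*k+2) by rw [← pow_mul]; ring_nf,
      show ((‖v.fst‖^2)^(k+1) : ℝ) = ‖v.fst‖^(2*k+2) by rw [← pow_mul]; ring_nf,
      show ((‖v.snd‖^2)^(k+1) : ℝ) = ‖v.snd‖^(2*k+2) by rw [← pow_mul]; ring_nf,
      show ((‖v.fst‖^2)^k : ℝ) = ‖v.fst‖^(2*k) by rw [← pow_mul],
      show ((‖v.snd‖^2)^k : ℝ) = ‖v.snd‖^(2*k) by rw [← pow_mul]]
  push_cast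
  ring


lemma abs_pow_sub_pow_le' (n : ℕ) {a b M d : ℝ} (ha : 0 ≤ a) (hb : 0 ≤ b)
    (haM : a ≤ M) (hbM : b ≤ M) (hd : |a - b| ≤ d) :
    |a ^ (n+1) - b ^ (n+1)| ≤ (n+1) * M ^ n * d := by
  induction n with
  | zero => simpa using hd
  | succ n ih =>
    have hM : 0 ≤ M := ha.trans haM
    have hd0 : 0 ≤ d := (abs_nonneg _).trans hd
    have key : a ^ (n+2) - b ^ (n+2) = a * (a ^ (n+1) - b ^ (n+1)) + b ^ (n+1) * (a - b) := by
      ring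
    calc |a ^ (n+2) - b ^ (n+2)|
        ≤ a * |a ^ (n+1) - b ^ (n+1)| + b ^ (n+1) * |a - b| := by
          rw [key]
          refine (abs_add_le _ _).trans ?_
          rw [abs_mul, abs_mul, abs_of_nonneg ha, abs_of_nonneg (pow_nonneg hb _)]
      _ ≤ M * ((n+1) * M ^ n * d) + M ^ (n+1) * d := by
          gcongr
      _ = ((n+1:ℕ)+1) * M ^ (n+1) * d := by push_cast; ring


lemma norm_pow_smul_sub_le (n : ℕ) {u u' : F} {M d : ℝ}
    (hu : ‖u‖ ≤ M) (hu' : ‖u'‖ ≤ M) (hd : ‖u - u'‖ ≤ d) :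
    ‖‖u‖ ^ n • u - ‖u'‖ ^ n • u'‖ ≤ (n+1) * M ^ n * d := by
  have hM : 0 ≤ M := (norm_nonneg u).trans hu
  have hd0 : 0 ≤ d := (norm_nonneg _).trans hd
  have key : ‖u‖ ^ n • u - ‖u'‖ ^ n • u' = ‖u‖ ^ n • (u - u') + (‖u‖ ^ n - ‖u'‖ ^ n) • u' := by
    rw [smul_sub, sub_smul]; abel
  have habs : |‖u‖ ^ n - ‖u'‖ ^ n| * ‖u'‖ ≤ n * M ^ n * d := by
    cases n with
    | zero => simp [hd0]
    | succ n =>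
      have h1 : |‖u‖ ^ (n+1) - ‖u'‖ ^ (n+1)| ≤ (n+1) * M ^ n * d :=
        abs_pow_sub_pow_le' n (norm_nonneg u) (norm_nonneg u') hu hu'
          ((abs_norm_sub_norm_le u u').trans hd)
      calc |‖u‖ ^ (n+1) - ‖u'‖ ^ (n+1)| * ‖u'‖
          ≤ ((n+1) * M ^ n * d) * M := by gcongr
        _ = (n+1:ℕ) * M ^ (n+1) * d := by push_cast; ring
  calc ‖‖u‖ ^ n • u - ‖u'‖ ^ n • u'‖
      ≤ ‖u‖ ^ n * ‖u - u'‖ + |‖u‖ ^ n - ‖u'‖ ^ n| * ‖u'‖ := by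
        rw [key]
        refine (norm_add_le _ _).trans ?_
        rw [norm_smul, norm_smul, Real.norm_eq_abs, Real.norm_eq_abs,
          abs_of_nonneg (pow_nonneg (norm_nonneg u) _)]
    _ ≤ M ^ n * d + n * M ^ n * d := by
        gcongr
    _ = (n+1) * M ^ n * d := by ring

lemma pow_le_one_add_pow {M : ℝ} (hM : 0 ≤ M) {i j : ℕ} (hij : i ≤ j) :
    M ^ i ≤ 1 + M ^ j := by
  rcases le_total M 1 with h | h
  · exact (pow_le_one₀ hM h).trans (by nlinarith [pow_nonneg hM j])
  · exact (pow_le_pow_right₀ h hij).trans (by nlinarith)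

lemma comp_bound (k : ℕ) {f f' : F} {b b' M d1 d2 : ℝ}
    (hf : ‖f‖ ≤ M) (hf' : ‖f'‖ ≤ M)
    (hb : 0 ≤ b) (hb' : 0 ≤ b') (hbM : b ≤ M) (hb'M : b' ≤ M)
    (h1 : ‖f - f'‖ ≤ d1) (h2 : |b - b'| ≤ d2) :
    ‖((b ^ (2*k+2) + 1) * ‖f‖ ^ (2*k) + 2 * ‖f‖ ^ (4*k+2)) • f
      - ((b' ^ (2*k+2) + 1) * ‖f'‖ ^ (2*k) + 2 * ‖f'‖ ^ (4*k+2)) • f'‖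
    ≤ (1 + M ^ (4*k+2)) * ((12*k+8) * d1 + (2*k+2) * d2) := by
  have hM : 0 ≤ M := (norm_nonneg f).trans hf
  have hd1 : 0 ≤ d1 := (norm_nonneg _).trans h1
  have hd2 : 0 ≤ d2 := (abs_nonneg _).trans h2
  set X : ℝ := b ^ (2*k+2) + 1 with hX
  set X' : ℝ := b' ^ (2*k+2) + 1 with hX'
  have key : ((b ^ (2*k+2) + 1) * ‖f‖ ^ (2*k) + 2 * ‖f‖ ^ (4*k+2)) • f
      - ((b' ^ (2*k+2) + 1) * ‖f'‖ ^ (2*k) + 2 * ‖f'‖ ^ (4*k+2)) • f'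
      = X • (‖f‖ ^ (2*k) • f - ‖f'‖ ^ (2*k) • f')
        + (X - X') • (‖f'‖ ^ (2*k) • f')
        + (2:ℝ) • (‖f‖ ^ (4*k+2) • f - ‖f'‖ ^ (4*k+2) • f') := by
    rw [hX, hX']
    simp only [smul_sub, sub_smul, add_smul, mul_smul, one_smul]
    abel
  have hX0 : 0 ≤ X := by positivity
  have b1 : ‖‖f‖ ^ (2*k) • f - ‖f'‖ ^ (2*k) • f'‖ ≤ (2*k+1) * M ^ (2*k) * d1 := by
    have := norm_pow_smul_sub_le (2*k) hf hf' h1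
    push_cast at this ⊢; linarith
  have b2 : ‖‖f‖ ^ (4*k+2) • f - ‖f'‖ ^ (4*k+2) • f'‖ ≤ (4*k+3) * M ^ (4*k+2) * d1 := by
    have := norm_pow_smul_sub_le (4*k+2) hf hf' h1
    push_cast at this ⊢; linarith
  have b3 : |X - X'| ≤ (2*k+2) * M ^ (2*k+1) * d2 := by
    have := abs_pow_sub_pow_le' (2*k+1) hb hb' hbM hb'M h2
    have e : X - X' = b ^ (2*k+2) - b' ^ (2*k+2) := by rw [hX, hX']; ring
    rw [e]
    have e2 : (2*k+1) + 1 = 2*k+2 := by omega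
    rw [e2] at this
    push_cast at this ⊢; linarith
  have b4 : ‖‖f'‖ ^ (2*k) • f'‖ ≤ M ^ (2*k+1) := by
    rw [norm_smul, Real.norm_eq_abs, abs_of_nonneg (pow_nonneg (norm_nonneg f') _)]
    calc ‖f'‖ ^ (2*k) * ‖f'‖ ≤ M ^ (2*k) * M := by gcongr
      _ = M ^ (2*k+1) := by rw [pow_succ]
  have hXM : X ≤ M ^ (2*k+2) + 1 := by rw [hX]; gcongr
  -- power relations
  have r1 : M ^ (2*k) * M ^ (2*k+2) = M ^ (4*k+2) := by rw [← pow_add]; ring_nf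
  have r2 : M ^ (2*k+1) * M ^ (2*k+1) = M ^ (4*k+2) := by rw [← pow_add]; ring_nf
  have r3 : M ^ (2*k) ≤ 1 + M ^ (4*k+2) := pow_le_one_add_pow hM (by omega)
  have r4 : M ^ (4*k+2) ≤ 1 + M ^ (4*k+2) := by nlinarith [pow_nonneg hM (4*k+2)]
  have hK0 : (0:ℝ) ≤ M ^ (4*k+2) := pow_nonneg hM _
  have hP0 : (0:ℝ) ≤ M ^ (2*k) := pow_nonneg hM _
  have hQ0 : (0:ℝ) ≤ M ^ (2*k+1) := pow_nonneg hM _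
  have hR0 : (0:ℝ) ≤ M ^ (2*k+2) := pow_nonneg hM _
  calc ‖((b ^ (2*k+2) + 1) * ‖f‖ ^ (2*k) + 2 * ‖f‖ ^ (4*k+2)) • f
      - ((b' ^ (2*k+2) + 1) * ‖f'‖ ^ (2*k) + 2 * ‖f'‖ ^ (4*k+2)) • f'‖
      ≤ X * ‖‖f‖ ^ (2*k) • f - ‖f'‖ ^ (2*k) • f'‖ + |X - X'| * ‖‖f'‖ ^ (2*k) • f'‖
        + 2 * ‖‖f‖ ^ (4*k+2) • f - ‖f'‖ ^ (4*k+2) • f'‖ := by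
        rw [key]
        refine (norm_add₃_le).trans ?_
        rw [norm_smul X, norm_smul (X - X'), norm_smul (2:ℝ), Real.norm_eq_abs,
          Real.norm_eq_abs, Real.norm_eq_abs, abs_of_nonneg hX0]
        norm_num
    _ ≤ (M ^ (2*k+2) + 1) * ((2*k+1) * M ^ (2*k) * d1)
        + ((2*k+2) * M ^ (2*k+1) * d2) * M ^ (2*k+1)
        + 2 * ((4*k+3) * M ^ (4*k+2) * d1) := by
        gcongr
    _ = ((2*k+1) * (M ^ (2*k) * M ^ (2*k+2)) + (2*k+1) * M ^ (2*k) + (8*k+6) * (M ^ (4*k+2)))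
          * d1 + ((2*k+2) * (M ^ (2*k+1) * M ^ (2*k+1))) * d2 := by ring
    _ = ((2*k+1) * M ^ (4*k+2) + (2*k+1) * M ^ (2*k) + (8*k+6) * M ^ (4*k+2)) * d1
          + ((2*k+2) * M ^ (4*k+2)) * d2 := by rw [r1, r2]
    _ ≤ (1 + M ^ (4*k+2)) * ((12*k+8) * d1 + (2*k+2) * d2) := by
        have c1 : (0:ℝ) ≤ (2*(k:ℝ)+1) * d1 * (1 + M ^ (4*k+2) - M ^ (2*k)) := by
          have := sub_nonneg.2 r3
          positivity
        have c2 : (0:ℝ) ≤ (10*(k:ℝ)+7) * d1 := by positivity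
        have c3 : (0:ℝ) ≤ (2*(k:ℝ)+2) * d2 := by positivity
        nlinarith [c1, c2, c3]


lemma normFstLe (v : WithLp 2 (F × G)) : ‖v.fst‖ ≤ ‖v‖ := by
  have h := WithLp.prod_norm_sq_eq_of_L2 v
  have : ‖v.fst‖ ^ 2 ≤ ‖v‖ ^ 2 := by nlinarith [sq_nonneg ‖v.snd‖]
  exact le_of_pow_le_pow_left₀ two_ne_zero (norm_nonneg v) this

lemma normSndLe (v : WithLp 2 (F × G)) : ‖v.snd‖ ≤ ‖v‖ := by
  have h := WithLp.prod_norm_sq_eq_of_L2 v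
  have : ‖v.snd‖ ^ 2 ≤ ‖v‖ ^ 2 := by nlinarith [sq_nonneg ‖v.fst‖]
  exact le_of_pow_le_pow_left₀ two_ne_zero (norm_nonneg v) this

lemma gradW_sub_le (k : ℕ) (v v' : WithLp 2 (F × G)) :
    ‖gradW k v - gradW k v'‖
      ≤ (2*(k+1) : ℝ) * 2 ^ (4*(k+1)) * (1 + ‖v‖ ^ (4*k+2) + ‖v'‖ ^ (4*k+2)) * ‖v - v'‖ := by
  set M : ℝ := max ‖v‖ ‖v'‖ with hM
  have hM0 : 0 ≤ M := le_max_of_le_left (norm_nonneg v)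
  set d1 : ℝ := ‖v.fst - v'.fst‖ with hd1def
  set d2 : ℝ := ‖v.snd - v'.snd‖ with hd2def
  have hd10 : 0 ≤ d1 := norm_nonneg _
  have hd20 : 0 ≤ d2 := norm_nonneg _
  have hsq : d1 ^ 2 + d2 ^ 2 = ‖v - v'‖ ^ 2 := by
    have h := WithLp.prod_norm_sq_eq_of_L2 (v - v')
    rw [WithLp.sub_fst, WithLp.sub_snd] at h
    rw [hd1def, hd2def, h]
  have hvf : ‖v.fst‖ ≤ M := (normFstLe v).trans (by rw [hM]; exact le_max_left _ _)
  have hvs : ‖v.snd‖ ≤ M := (normSndLe v).trans (by rw [hM]; exact le_max_left _ _)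
  have hvf' : ‖v'.fst‖ ≤ M := (normFstLe v').trans (by rw [hM]; exact le_max_right _ _)
  have hvs' : ‖v'.snd‖ ≤ M := (normSndLe v').trans (by rw [hM]; exact le_max_right _ _)
  set K : ℝ := M ^ (4*k+2) with hK
  have hK0 : 0 ≤ K := pow_nonneg hM0 _
  set κ : ℝ := 2*(k+1) with hκ
  have hκ0 : (0:ℝ) ≤ κ := by positivity
  set α : ℝ := 12*k+8 with hα
  set β : ℝ := 2*k+2 with hβ
  have hα0 : (0:ℝ) ≤ α := by positivity
  have hβ0 : (0:ℝ) ≤ β := by positivity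
  -- first component bound
  have efst : (gradW k v - gradW k v').fst
      = κ • (((‖v.snd‖ ^ (2*k+2) + 1) * ‖v.fst‖ ^ (2*k) + 2 * ‖v.fst‖ ^ (4*k+2)) • v.fst
          - ((‖v'.snd‖ ^ (2*k+2) + 1) * ‖v'.fst‖ ^ (2*k) + 2 * ‖v'.fst‖ ^ (4*k+2)) • v'.fst) := by
    rw [WithLp.sub_fst]
    show (κ * _) • v.fst - (κ * _) • v'.fst = _
    rw [smul_sub, smul_smul, smul_smul]
  have esnd : (gradW k v - gradW k v').snd
      = κ • (((‖v.fst‖ ^ (2*k+2) + 1) * ‖v.snd‖ ^ (2*k) + 2 * ‖v.snd‖ ^ (4*k+2)) • v.snd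
          - ((‖v'.fst‖ ^ (2*k+2) + 1) * ‖v'.snd‖ ^ (2*k) + 2 * ‖v'.snd‖ ^ (4*k+2)) • v'.snd) := by
    rw [WithLp.sub_snd]
    show (κ * _) • v.snd - (κ * _) • v'.snd = _
    rw [smul_sub, smul_smul, smul_smul]
  have hfst : ‖(gradW k v - gradW k v').fst‖ ≤ κ * ((1 + K) * (α * d1 + β * d2)) := by
    rw [efst, norm_smul, Real.norm_eq_abs, abs_of_nonneg hκ0]
    have := comp_bound k (f := v.fst) (f' := v'.fst) (b := ‖v.snd‖) (b' := ‖v'.snd‖)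
      hvf hvf' (norm_nonneg _) (norm_nonneg _) hvs hvs' le_rfl
      ((abs_norm_sub_norm_le v.snd v'.snd).trans le_rfl)
    have h2 := this
    rw [hK, hα, hβ]
    push_cast
    push_cast at h2
    nlinarith [h2, hκ0]
  have hsnd : ‖(gradW k v - gradW k v').snd‖ ≤ κ * ((1 + K) * (α * d2 + β * d1)) := by
    rw [esnd, norm_smul, Real.norm_eq_abs, abs_of_nonneg hκ0]
    have h2 := comp_bound k (f := v.snd) (f' := v'.snd) (b := ‖v.fst‖) (b' := ‖v'.fst‖)
      hvs hvs' (norm_nonneg _) (norm_nonneg _) hvf hvf' le_rfl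
      ((abs_norm_sub_norm_le v.fst v'.fst).trans le_rfl)
    rw [hK, hα, hβ]
    push_cast
    push_cast at h2
    nlinarith [h2, hκ0]
  set C : ℝ := κ * (1 + K) with hC
  have hC0 : 0 ≤ C := mul_nonneg hκ0 (by linarith)
  have s1 : ‖(gradW k v - gradW k v').fst‖ ^ 2 ≤ (C * (α * d1 + β * d2)) ^ 2 := by
    have h0 := norm_nonneg (gradW k v - gradW k v').fst
    have h1 : κ * ((1 + K) * (α * d1 + β * d2)) = C * (α * d1 + β * d2) := by rw [hC]; ring
    nlinarith [hfst]
  have s2 : ‖(gradW k v - gradW k v').snd‖ ^ 2 ≤ (C * (α * d2 + β * d1)) ^ 2 := by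
    have h0 := norm_nonneg (gradW k v - gradW k v').snd
    have h1 : κ * ((1 + K) * (α * d2 + β * d1)) = C * (α * d2 + β * d1) := by rw [hC]; ring
    nlinarith [hsnd]
  have s3 : (C * (α * d1 + β * d2)) ^ 2 + (C * (α * d2 + β * d1)) ^ 2
      ≤ (C * (α + β)) ^ 2 * (d1 ^ 2 + d2 ^ 2) := by
    nlinarith [mul_nonneg (mul_nonneg (sq_nonneg C) (mul_nonneg hα0 hβ0)) (sq_nonneg (d1 - d2))]
  have hnorm2 : ‖gradW k v - gradW k v'‖ ^ 2 ≤ (C * (α + β) * ‖v - v'‖) ^ 2 := by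
    have h := WithLp.prod_norm_sq_eq_of_L2 (gradW k v - gradW k v')
    calc ‖gradW k v - gradW k v'‖ ^ 2
        = ‖(gradW k v - gradW k v').fst‖ ^ 2 + ‖(gradW k v - gradW k v').snd‖ ^ 2 := h
      _ ≤ (C * (α + β)) ^ 2 * (d1 ^ 2 + d2 ^ 2) := by linarith [s1, s2, s3]
      _ = (C * (α + β) * ‖v - v'‖) ^ 2 := by
          rw [show (C * (α + β) * ‖v - v'‖) ^ 2 = (C * (α + β)) ^ 2 * ‖v - v'‖ ^ 2 from by ring,
            ← hsq]
  have hmain : ‖gradW k v - gradW k v'‖ ≤ C * (α + β) * ‖v - v'‖ := by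
    refine le_of_pow_le_pow_left₀ two_ne_zero ?_ hnorm2
    positivity
  refine hmain.trans ?_
  -- final constant comparison
  have hKle : K ≤ ‖v‖ ^ (4*k+2) + ‖v'‖ ^ (4*k+2) := by
    rw [hK, hM]
    rcases max_cases ‖v‖ ‖v'‖ with ⟨h1, _⟩ | ⟨h1, _⟩ <;> rw [h1]
    · nlinarith [pow_nonneg (norm_nonneg v') (4*k+2)]
    · nlinarith [pow_nonneg (norm_nonneg v) (4*k+2)]
  have hpow : α + β ≤ (2:ℝ) ^ (4*(k+1)) := by
    have h1 : (14*k+10 : ℕ) ≤ 2 ^ (4*(k+1)) := by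
      have h2 : k + 1 ≤ 16 ^ k := Nat.lt_pow_self (by norm_num : 1 < 16)
      calc (14*k+10 : ℕ) ≤ 16*(k+1) := by omega
        _ ≤ 16 * 16 ^ k := by omega
        _ = 16 ^ (k+1) := (pow_succ' 16 k).symm
        _ = 2 ^ (4*(k+1)) := by rw [pow_mul]; norm_num
    rw [hα, hβ]
    calc (12*(k:ℝ)+8) + (2*k+2) = ((14*k+10 : ℕ) : ℝ) := by push_cast; ring
      _ ≤ ((2 ^ (4*(k+1)) : ℕ) : ℝ) := by exact_mod_cast h1
      _ = (2:ℝ) ^ (4*(k+1)) := by push_cast; ring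
  have h1K : 1 + K ≤ 1 + ‖v‖ ^ (4*k+2) + ‖v'‖ ^ (4*k+2) := by linarith
  calc C * (α + β) * ‖v - v'‖
      ≤ (κ * (1 + ‖v‖ ^ (4*k+2) + ‖v'‖ ^ (4*k+2))) * ((2:ℝ) ^ (4*(k+1))) * ‖v - v'‖ := by
        rw [hC]
        have hQ0 : (0:ℝ) ≤ 1 + ‖v‖ ^ (4*k+2) + ‖v'‖ ^ (4*k+2) := by positivity
        have := mul_le_mul (mul_le_mul_of_nonneg_left h1K hκ0) hpow (by linarith) 
          (mul_nonneg hκ0 hQ0)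
        have h3 : κ * (1 + K) * (α + β) ≤ κ * (1 + ‖v‖ ^ (4*k+2) + ‖v'‖ ^ (4*k+2)) * 2 ^ (4*(k+1)) := this
        exact mul_le_mul_of_nonneg_right h3 (norm_nonneg _)
    _ = κ * 2 ^ (4*(k+1)) * (1 + ‖v‖ ^ (4*k+2) + ‖v'‖ ^ (4*k+2)) * ‖v - v'‖ := by ring

end

open Real

/-- The gradient of the potential
`W(θ,x) = |x|^{4m} + (|x|^{2m}+1)(|θ|^{2m}+1) + |θ|^{4m}` is locally Lipschitz with
polynomial growth:
`|∇W(v) − ∇W(v')| ≤ 2m·2^{4m} (1 + |v|^{4m−2} + |v'|^{4m−2}) |v − v'|`. -/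
theorem stmt_11 (m dθ dx : ℕ) (hm : 0 < m) (hdθ : 0 < dθ) (hdx : 0 < dx)
    (W : WithLp 2 (EuclideanSpace ℝ (Fin dθ) × EuclideanSpace ℝ (Fin dx)) → ℝ)
    (hW : ∀ v : WithLp 2 (EuclideanSpace ℝ (Fin dθ) × EuclideanSpace ℝ (Fin dx)),
      W v = ‖((WithLp.equiv 2 _) v).2‖ ^ (4 * m)
        + (‖((WithLp.equiv 2 _) v).2‖ ^ (2 * m) + 1)
            * (‖((WithLp.equiv 2 _) v).1‖ ^ (2 * m) + 1)
        + ‖((WithLp.equiv 2 _) v).1‖ ^ (4 * m)) :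
    ∀ v v' : WithLp 2 (EuclideanSpace ℝ (Fin dθ) × EuclideanSpace ℝ (Fin dx)),
      ‖gradient W v - gradient W v'‖
        ≤ 2 * m * 2 ^ (4 * m)
            * (1 + ‖v‖ ^ (4 * m - 2) + ‖v'‖ ^ (4 * m - 2)) * ‖v - v'‖ := by
  obtain ⟨k, rfl⟩ : ∃ k, m = k + 1 := ⟨m - 1, by omega⟩
  intro v v'
  have hWeq : W = fun w : WithLp 2 (EuclideanSpace ℝ (Fin dθ) × EuclideanSpace ℝ (Fin dx)) =>
      ‖w.snd‖ ^ (4*(k+1)) + (‖w.snd‖ ^ (2*(k+1)) + 1) * (‖w.fst‖ ^ (2*(k+1)) + 1)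
        + ‖w.fst‖ ^ (4*(k+1)) := funext fun w => hW w
  have hg : ∀ u, gradient W u = gradW k u := fun u => by
    rw [hWeq]
    exact (hasGradientAt_W k u).gradient
  rw [hg v, hg v']
  have hsub : 4 * (k+1) - 2 = 4*k+2 := by omega
  rw [hsub]
  have := gradW_sub_le k v v'
  calc ‖gradW k v - gradW k v'‖
      ≤ (2*(k+1) : ℝ) * 2 ^ (4*(k+1)) * (1 + ‖v‖ ^ (4*k+2) + ‖v'‖ ^ (4*k+2)) * ‖v - v'‖ := this
    _ = 2 * (↑(k+1)) * 2 ^ (4*(k+1)) * (1 + ‖v‖ ^ (4*k+2) + ‖v'‖ ^ (4*k+2)) * ‖v - v'‖ := by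
        push_cast; ring
end

section
/- The superlinear toy potential U is strongly convex with constant 2: for all v, v' ∈ ℝ^{d^θ} × ℝ^{d^x}, ⟨v − v', ∇U(v) − ∇U(v')⟩ ≥ 2 |v − v'|². -/
open Real

open Real Set

section aux

variable {F : Type*} [NormedAddCommGroup F] [InnerProductSpace ℝ F] [CompleteSpace F]

local notation "⟪" x ", " y "⟫" => @inner ℝ _ _ x y

lemma aux_hasGradientAt_norm_sq (v : F) :
    HasGradientAt (fun w : F => ‖w‖ ^ 2) ((2:ℝ) • v) v := by
  have h1 : HasFDerivAt (fun w : F => ⟪w, w⟫)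
      ((fderivInnerCLM ℝ (v, v)).comp
        ((ContinuousLinearMap.id ℝ F).prod (ContinuousLinearMap.id ℝ F))) v :=
    (hasFDerivAt_id v).inner ℝ (hasFDerivAt_id v)
  have h2 : (InnerProductSpace.toDual ℝ F) ((2:ℝ) • v)
      = (fderivInnerCLM ℝ (v, v)).comp
        ((ContinuousLinearMap.id ℝ F).prod (ContinuousLinearMap.id ℝ F)) := by
    ext w
    simp [fderivInnerCLM_apply, inner_smul_left, real_inner_comm v w]
    ring
  rw [hasGradientAt_iff_hasFDerivAt, h2]
  have : (fun w : F => ‖w‖ ^ 2) = fun w : F => ⟪w, w⟫ := by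
    funext w; rw [real_inner_self_eq_norm_sq]
  rw [this]
  exact h1

lemma aux_hasGradientAt_add {f g : F → ℝ} {f' g' : F} {x : F}
    (hf : HasGradientAt f f' x) (hg : HasGradientAt g g' x) :
    HasGradientAt (fun y => f y + g y) (f' + g') x := by
  rw [hasGradientAt_iff_hasFDerivAt] at *
  rw [map_add]
  exact hf.add hg

lemma aux_grad_mono {f : F → ℝ} (hf : Differentiable ℝ f)
    (hc : ConvexOn ℝ univ f) (v v' : F) :
    0 ≤ ⟪v - v', gradient f v - gradient f v'⟫ := by
  set w := v - v' with hw
  have hline : ∀ t : ℝ, HasDerivAt (fun t : ℝ => v' + t • w) w t := by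
    intro t
    simpa using ((hasDerivAt_id t).smul_const w).const_add v'
  have hφd : ∀ t : ℝ, HasDerivAt (f ∘ fun t : ℝ => v' + t • w)
      ⟪gradient f (v' + t • w), w⟫ t := by
    intro t
    have := ((hf (v' + t • w)).hasGradientAt.hasFDerivAt).comp_hasDerivAt t (hline t)
    simpa using this
  have hLeq : (fun t : ℝ => v' + t • w) = ⇑(AffineMap.lineMap v' v) := by
    funext t
    rw [AffineMap.lineMap_apply_module]
    rw [hw]
    module
  have hconv : ConvexOn ℝ univ (f ∘ fun t : ℝ => v' + t • w) := by
    rw [hLeq]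
    simpa using hc.comp_affineMap (AffineMap.lineMap v' v)
  have h0 : HasDerivAt (f ∘ fun t : ℝ => v' + t • w) ⟪gradient f v', w⟫ 0 := by
    have := hφd 0; simpa using this
  have h1 : HasDerivAt (f ∘ fun t : ℝ => v' + t • w) ⟪gradient f v, w⟫ 1 := by
    have := hφd 1
    have hv : v' + (1:ℝ) • w = v := by rw [hw]; module
    rwa [hv] at this
  have hle1 := hconv.le_slope_of_hasDerivAt (mem_univ (0:ℝ)) (mem_univ 1) one_pos h0
  have hle2 := hconv.slope_le_of_hasDerivAt (mem_univ (0:ℝ)) (mem_univ 1) one_pos h1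
  have : ⟪gradient f v', w⟫ ≤ ⟪gradient f v, w⟫ := le_trans hle1 hle2
  rw [inner_sub_right]
  linarith [real_inner_comm w (gradient f v), real_inner_comm w (gradient f v')]

end aux

lemma aux_convexOn_pow {X : Type*} [AddCommGroup X] [Module ℝ X] {f : X → ℝ}
    (hf : ConvexOn ℝ Set.univ f) (h0 : ∀ x, 0 ≤ f x) (n : ℕ) :
    ConvexOn ℝ Set.univ (fun x => f x ^ n) := by
  refine ⟨convex_univ, fun x _ y _ a b ha hb hab => ?_⟩
  have h1 : f (a • x + b • y) ^ n ≤ (a * f x + b * f y) ^ n :=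
    pow_le_pow_left₀ (h0 _)
      (by simpa using hf.2 (Set.mem_univ x) (Set.mem_univ y) ha hb hab) n
  have h2 := (convexOn_pow n).2 (Set.mem_Ici.2 (h0 x)) (Set.mem_Ici.2 (h0 y)) ha hb hab
  simp only [smul_eq_mul] at h2 ⊢
  exact h1.trans h2

section key

variable {H₁ H₂ : Type*} [NormedAddCommGroup H₁] [InnerProductSpace ℝ H₁] [CompleteSpace H₁]
  [NormedAddCommGroup H₂] [InnerProductSpace ℝ H₂] [CompleteSpace H₂]

lemma aux_key (m : ℕ) (hm : 0 < m) (U : WithLp 2 (H₁ × H₂) → ℝ)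
    (hU : ∀ v : WithLp 2 (H₁ × H₂),
      U v = ‖((WithLp.equiv 2 _) v).2‖ ^ (4 * m)
        + (‖((WithLp.equiv 2 _) v).2‖ ^ (2 * m) + 1)
            * (‖((WithLp.equiv 2 _) v).1‖ ^ (2 * m) + 1)
        + ‖((WithLp.equiv 2 _) v).1‖ ^ (4 * m)
        + ‖((WithLp.equiv 2 _) v).2‖ ^ 4
        + (‖((WithLp.equiv 2 _) v).2‖ ^ 2 + 1) * (‖((WithLp.equiv 2 _) v).1‖ ^ 2 + 1)
        + ‖((WithLp.equiv 2 _) v).1‖ ^ 4)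
    (v v' : WithLp 2 (H₁ × H₂)) :
    (inner ℝ (v - v') (gradient U v - gradient U v') : ℝ) ≥ 2 * ‖v - v'‖ ^ 2 := by
  set fstL : WithLp 2 (H₁ × H₂) →L[ℝ] H₁ := (ContinuousLinearMap.fst ℝ H₁ H₂).comp
    (WithLp.prodContinuousLinearEquiv 2 ℝ H₁ H₂).toContinuousLinearMap with hfstL
  set sndL : WithLp 2 (H₁ × H₂) →L[ℝ] H₂ := (ContinuousLinearMap.snd ℝ H₁ H₂).comp
    (WithLp.prodContinuousLinearEquiv 2 ℝ H₁ H₂).toContinuousLinearMap with hsndL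
  set p : WithLp 2 (H₁ × H₂) → ℝ := fun w => ‖fstL w‖ with hp'
  set q : WithLp 2 (H₁ × H₂) → ℝ := fun w => ‖sndL w‖ with hq'
  -- differentiability of U
  have hA : Differentiable ℝ (fun w : WithLp 2 (H₁ × H₂) => ‖fstL w‖ ^ 2) :=
    ((contDiff_norm_sq ℝ (n := 1)).comp fstL.contDiff).differentiable one_ne_zero
  have hB : Differentiable ℝ (fun w : WithLp 2 (H₁ × H₂) => ‖sndL w‖ ^ 2) :=
    ((contDiff_norm_sq ℝ (n := 1)).comp sndL.contDiff).differentiable one_ne_zero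
  have hUeq : U = fun w : WithLp 2 (H₁ × H₂) => (‖sndL w‖ ^ 2) ^ (2 * m)
      + ((‖sndL w‖ ^ 2) ^ m + 1) * ((‖fstL w‖ ^ 2) ^ m + 1)
      + (‖fstL w‖ ^ 2) ^ (2 * m)
      + (‖sndL w‖ ^ 2) ^ 2
      + (‖sndL w‖ ^ 2 + 1) * (‖fstL w‖ ^ 2 + 1)
      + (‖fstL w‖ ^ 2) ^ 2 := by
    funext w
    have h1 : ‖((WithLp.equiv 2 _) w).1‖ = ‖fstL w‖ := rfl
    have h2 : ‖((WithLp.equiv 2 _) w).2‖ = ‖sndL w‖ := rfl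
    rw [hU w, h1, h2]
    ring
  have hUdiff : Differentiable ℝ U := by
    rw [hUeq]
    exact ((((((hB.pow (2*m)).add (((hB.pow m).add_const 1).mul
      ((hA.pow m).add_const 1))).add (hA.pow (2*m))).add (hB.pow 2)).add
      ((hB.add_const 1).mul (hA.add_const 1))).add (hA.pow 2))
  -- W := U - ‖·‖²
  set W : WithLp 2 (H₁ × H₂) → ℝ := fun w => U w - ‖w‖ ^ 2 with hWdef
  have hnsq : Differentiable ℝ (fun w : WithLp 2 (H₁ × H₂) => ‖w‖ ^ 2) :=
    (contDiff_norm_sq ℝ (n := 1)).differentiable one_ne_zero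
  have hWdiff : Differentiable ℝ W := hUdiff.sub hnsq
  -- convexity of W
  have hpconv : ConvexOn ℝ Set.univ p := by
    have := convexOn_univ_norm.comp_affineMap fstL.toLinearMap.toAffineMap
    exact this
  have hqconv : ConvexOn ℝ Set.univ q := by
    have := convexOn_univ_norm.comp_affineMap sndL.toLinearMap.toAffineMap
    exact this
  have hpn : ∀ x : WithLp 2 (H₁ × H₂), 0 ≤ p x := fun x => norm_nonneg _
  have hqn : ∀ x : WithLp 2 (H₁ × H₂), 0 ≤ q x := fun x => norm_nonneg _
  have half : (0:ℝ) ≤ 1/2 := by norm_num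
  have hsconv : ConvexOn ℝ Set.univ
      (fun w => p w ^ (2*m) + q w ^ (2*m)) :=
    (aux_convexOn_pow hpconv hpn (2*m)).add (aux_convexOn_pow hqconv hqn (2*m))
  have hs2conv : ConvexOn ℝ Set.univ (fun w => p w ^ 2 + q w ^ 2) :=
    (aux_convexOn_pow hpconv hpn 2).add (aux_convexOn_pow hqconv hqn 2)
  have hG : ConvexOn ℝ Set.univ
      (fun w : WithLp 2 (H₁ × H₂) =>
        (1/2 : ℝ) * (p w ^ (2*m) + q w ^ (2*m)) ^ 2 + (1/2 : ℝ) * p w ^ (4*m)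
        + (1/2 : ℝ) * q w ^ (4*m) + p w ^ (2*m) + q w ^ (2*m)
        + (1/2 : ℝ) * (p w ^ 2 + q w ^ 2) ^ 2 + (1/2 : ℝ) * p w ^ 4
        + (1/2 : ℝ) * q w ^ 4 + 2) :=
    ((((((((ConvexOn.smul half (aux_convexOn_pow hsconv
        (fun x => add_nonneg (pow_nonneg (hpn x) _) (pow_nonneg (hqn x) _)) 2)).add
      (ConvexOn.smul half (aux_convexOn_pow hpconv hpn (4*m)))).add
      (ConvexOn.smul half (aux_convexOn_pow hqconv hqn (4*m)))).add
      (aux_convexOn_pow hpconv hpn (2*m))).add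
      (aux_convexOn_pow hqconv hqn (2*m))).add
      (ConvexOn.smul half (aux_convexOn_pow hs2conv
        (fun x => add_nonneg (pow_nonneg (hpn x) _) (pow_nonneg (hqn x) _)) 2))).add
      (ConvexOn.smul half (aux_convexOn_pow hpconv hpn 4))).add
      (ConvexOn.smul half (aux_convexOn_pow hqconv hqn 4))).add
      (convexOn_const (2:ℝ) convex_univ)
  have hWG : W = fun w : WithLp 2 (H₁ × H₂) =>
        (1/2 : ℝ) * (p w ^ (2*m) + q w ^ (2*m)) ^ 2 + (1/2 : ℝ) * p w ^ (4*m)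
        + (1/2 : ℝ) * q w ^ (4*m) + p w ^ (2*m) + q w ^ (2*m)
        + (1/2 : ℝ) * (p w ^ 2 + q w ^ 2) ^ 2 + (1/2 : ℝ) * p w ^ 4
        + (1/2 : ℝ) * q w ^ 4 + 2 := by
    funext w
    have h3 : ‖w‖ ^ 2 = p w ^ 2 + q w ^ 2 := by
      rw [WithLp.prod_norm_sq_eq_of_L2]; rfl
    have h1 : ‖((WithLp.equiv 2 _) w).1‖ = p w := rfl
    have h2 : ‖((WithLp.equiv 2 _) w).2‖ = q w := rfl
    show U w - ‖w‖ ^ 2 = _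
    rw [hU w, h1, h2, h3]
    ring
  have hWconv : ConvexOn ℝ Set.univ W := hWG ▸ hG
  -- gradient decomposition
  have hUW : U = fun w => W w + ‖w‖ ^ 2 := by funext w; simp [hWdef]
  have hgrad : ∀ w : WithLp 2 (H₁ × H₂), gradient U w = gradient W w + (2:ℝ) • w := by
    intro w
    have h := aux_hasGradientAt_add ((hWdiff w).hasGradientAt) (aux_hasGradientAt_norm_sq w)
    rw [← hUW] at h
    exact h.gradient
  have hmono := aux_grad_mono hWdiff hWconv v v'
  rw [hgrad v, hgrad v']
  have hsplit : (gradient W v + (2:ℝ) • v) - (gradient W v' + (2:ℝ) • v')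
      = (gradient W v - gradient W v') + (2:ℝ) • (v - v') := by module
  rw [hsplit, inner_add_right, real_inner_smul_right, real_inner_self_eq_norm_sq]
  linarith

end key


/-- The superlinear toy potential
`U(θ,x) = |x|^{4m} + (|x|^{2m}+1)(|θ|^{2m}+1) + |θ|^{4m}
          + |x|⁴ + (|x|²+1)(|θ|²+1) + |θ|⁴`
is strongly convex with constant 2: `⟪v − v', ∇U(v) − ∇U(v')⟫ ≥ 2|v − v'|²`. -/
theorem stmt_12 (m dθ dx : ℕ) (hm : 0 < m) (hdθ : 0 < dθ) (hdx : 0 < dx)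
    (U : WithLp 2 (EuclideanSpace ℝ (Fin dθ) × EuclideanSpace ℝ (Fin dx)) → ℝ)
    (hU : ∀ v : WithLp 2 (EuclideanSpace ℝ (Fin dθ) × EuclideanSpace ℝ (Fin dx)),
      U v = ‖((WithLp.equiv 2 _) v).2‖ ^ (4 * m)
        + (‖((WithLp.equiv 2 _) v).2‖ ^ (2 * m) + 1)
            * (‖((WithLp.equiv 2 _) v).1‖ ^ (2 * m) + 1)
        + ‖((WithLp.equiv 2 _) v).1‖ ^ (4 * m)
        + ‖((WithLp.equiv 2 _) v).2‖ ^ 4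
        + (‖((WithLp.equiv 2 _) v).2‖ ^ 2 + 1) * (‖((WithLp.equiv 2 _) v).1‖ ^ 2 + 1)
        + ‖((WithLp.equiv 2 _) v).1‖ ^ 4) :
    ∀ v v' : WithLp 2 (EuclideanSpace ℝ (Fin dθ) × EuclideanSpace ℝ (Fin dx)),
      (inner ℝ (v - v') (gradient U v - gradient U v') : ℝ) ≥ 2 * ‖v - v'‖ ^ 2 := by
  exact fun v v' => aux_key m hm U hU v v'
end

section
/- The mixed-term potential U is strongly convex with constant 1: for all v, v' ∈ ℝ^d × ℝ^d, ⟨v − v', ∇U(v) − ∇U(v')⟩ ≥ |v − v'|². -/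
open Real

section Aux

lemma key_14aux (A A' B B' s t sx tx R : ℝ)
    (hA : 0 ≤ A) (hA' : 0 ≤ A') (hB : 0 ≤ B) (hB' : 0 ≤ B')
    (hu : 0 ≤ s - t) (hw : 0 ≤ sx - tx)
    (hst : s + t = A - A') (hsxtx : sx + tx = B - B')
    (hR : R ^ 2 ≤ (s - t) * (sx - tx)) :
    (s - t) + (sx - tx) ≤
      2 * R + 4 * (B * sx - B' * tx) + 2 * ((B + 1) * s - (B' + 1) * t)
        + 2 * ((A + 1) * sx - (A' + 1) * tx) + 4 * (A * s - A' * t) := by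
  have h2R : -((s - t) + (sx - tx)) ≤ 2 * R := by
    nlinarith [sq_nonneg ((s - t) - (sx - tx)), sq_nonneg ((s - t) + (sx - tx) + 2 * R)]
  nlinarith [mul_nonneg hu hA, mul_nonneg hu hA', mul_nonneg hu hB, mul_nonneg hu hB',
    mul_nonneg hw hA, mul_nonneg hw hA', mul_nonneg hw hB, mul_nonneg hw hB',
    sq_nonneg (A - A' + B - B'), sq_nonneg (A - A'), sq_nonneg (B - B')]

lemma key_14aux2 (A A' P B B' Q R : ℝ)
    (hA : 0 ≤ A) (hA' : 0 ≤ A') (hB : 0 ≤ B) (hB' : 0 ≤ B')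
    (hu : 0 ≤ A - 2 * P + A') (hw : 0 ≤ B - 2 * Q + B')
    (hR : R ^ 2 ≤ (A - 2 * P + A') * (B - 2 * Q + B')) :
    (A - 2 * P + A') + (B - 2 * Q + B') ≤
      2 * R + 4 * (B * (B - Q) - B' * (Q - B')) + 2 * ((B + 1) * (A - P) - (B' + 1) * (P - A'))
        + 2 * ((A + 1) * (B - Q) - (A' + 1) * (Q - B')) + 4 * (A * (A - P) - A' * (P - A')) := by
  have h := key_14aux A A' B B' (A - P) (P - A') (B - Q) (Q - B') R hA hA' hB hB'
    (by linarith) (by linarith) (by ring) (by ring) (by nlinarith [hR])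
  nlinarith [h]

noncomputable section

variable {d : ℕ}

abbrev Ed14 (d : ℕ) := EuclideanSpace ℝ (Fin d)
abbrev Vd14 (d : ℕ) := WithLp 2 (Ed14 d × Ed14 d)

def P1_14 (d : ℕ) : Vd14 d →L[ℝ] Ed14 d :=
  (ContinuousLinearMap.fst ℝ (Ed14 d) (Ed14 d)).comp
    (WithLp.prodContinuousLinearEquiv 2 ℝ (Ed14 d) (Ed14 d)).toContinuousLinearMap

def P2_14 (d : ℕ) : Vd14 d →L[ℝ] Ed14 d :=
  (ContinuousLinearMap.snd ℝ (Ed14 d) (Ed14 d)).comp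
    (WithLp.prodContinuousLinearEquiv 2 ℝ (Ed14 d) (Ed14 d)).toContinuousLinearMap

@[simp] lemma P1_14_apply (w : Vd14 d) : P1_14 d w = w.fst := rfl
@[simp] lemma P2_14_apply (w : Vd14 d) : P2_14 d w = w.snd := rfl

lemma grad_eq_14 (U : Vd14 d → ℝ)
    (hU : ∀ v : Vd14 d,
      U v = (inner ℝ ((WithLp.equiv 2 _) v).2 ((WithLp.equiv 2 _) v).1 : ℝ)
        + ‖((WithLp.equiv 2 _) v).2‖ ^ 4
        + (‖((WithLp.equiv 2 _) v).2‖ ^ 2 + 1) * (‖((WithLp.equiv 2 _) v).1‖ ^ 2 + 1)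
        + ‖((WithLp.equiv 2 _) v).1‖ ^ 4) (v : Vd14 d) :
    gradient U v = (WithLp.equiv 2 (Ed14 d × Ed14 d)).symm
      ( v.snd + ((2 * ‖v.snd‖ ^ 2 + 2) + 4 * ‖v.fst‖ ^ 2) • v.fst,
        v.fst + (4 * ‖v.snd‖ ^ 2 + (2 * ‖v.fst‖ ^ 2 + 2)) • v.snd ) := by
  have hU' : U = fun w : Vd14 d => (inner ℝ w.snd w.fst : ℝ)
      + (inner ℝ w.snd w.snd : ℝ) * (inner ℝ w.snd w.snd : ℝ)
      + ((inner ℝ w.snd w.snd : ℝ) + 1) * ((inner ℝ w.fst w.fst : ℝ) + 1)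
      + (inner ℝ w.fst w.fst : ℝ) * (inner ℝ w.fst w.fst : ℝ) := by
    funext w
    rw [hU w]
    simp only [WithLp.equiv_apply, WithLp.ofLp_fst, WithLp.ofLp_snd, real_inner_self_eq_norm_sq]
    ring
  subst hU'
  have ha : HasFDerivAt (fun w : Vd14 d => (inner ℝ w.fst w.fst : ℝ))
      ((fderivInnerCLM ℝ (v.fst, v.fst)).comp ((P1_14 d).prod (P1_14 d))) v :=
    (P1_14 d).hasFDerivAt.inner ℝ (P1_14 d).hasFDerivAt
  have hb : HasFDerivAt (fun w : Vd14 d => (inner ℝ w.snd w.snd : ℝ))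
      ((fderivInnerCLM ℝ (v.snd, v.snd)).comp ((P2_14 d).prod (P2_14 d))) v :=
    (P2_14 d).hasFDerivAt.inner ℝ (P2_14 d).hasFDerivAt
  have hc : HasFDerivAt (fun w : Vd14 d => (inner ℝ w.snd w.fst : ℝ))
      ((fderivInnerCLM ℝ (v.snd, v.fst)).comp ((P2_14 d).prod (P1_14 d))) v :=
    (P2_14 d).hasFDerivAt.inner ℝ (P1_14 d).hasFDerivAt
  have hD := ((hc.add (hb.mul hb)).add ((hb.add_const 1).mul (ha.add_const 1))).add (ha.mul ha)
  have hg := hD.hasGradientAt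
  refine hg.gradient.trans ?_
  refine Eq.trans (congrArg _ ?_) (LinearIsometryEquiv.symm_apply_apply _ _)
  ext w
  simp only [ContinuousLinearMap.add_apply, ContinuousLinearMap.coe_smul', Pi.smul_apply,
    ContinuousLinearMap.comp_apply, ContinuousLinearMap.prod_apply, fderivInnerCLM_apply,
    P1_14_apply, P2_14_apply, InnerProductSpace.toDual_apply_apply, WithLp.ofLp_fst, WithLp.ofLp_snd, WithLp.prod_inner_apply,
    WithLp.equiv_symm_apply, WithLp.toLp_fst, WithLp.toLp_snd, inner_add_left, real_inner_smul_left,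
    smul_eq_mul, real_inner_self_eq_norm_sq]
  rw [real_inner_comm w.fst v.fst, real_inner_comm w.snd v.snd, real_inner_comm w.fst v.snd,
    real_inner_comm v.fst w.snd]
  ring

end
end Aux

/-- The mixed-term potential `U(θ,x) = ⟨x,θ⟩ + |x|⁴ + (|x|²+1)(|θ|²+1) + |θ|⁴`
is strongly convex with constant 1: `⟨v − v', ∇U(v) − ∇U(v')⟩ ≥ |v − v'|²`. -/
theorem stmt_14 (d : ℕ) (hd : 0 < d)
    (U : WithLp 2 (EuclideanSpace ℝ (Fin d) × EuclideanSpace ℝ (Fin d)) → ℝ)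
    (hU : ∀ v : WithLp 2 (EuclideanSpace ℝ (Fin d) × EuclideanSpace ℝ (Fin d)),
      U v = (inner ℝ ((WithLp.equiv 2 _) v).2 ((WithLp.equiv 2 _) v).1 : ℝ)
        + ‖((WithLp.equiv 2 _) v).2‖ ^ 4
        + (‖((WithLp.equiv 2 _) v).2‖ ^ 2 + 1) * (‖((WithLp.equiv 2 _) v).1‖ ^ 2 + 1)
        + ‖((WithLp.equiv 2 _) v).1‖ ^ 4) :
    ∀ v v' : WithLp 2 (EuclideanSpace ℝ (Fin d) × EuclideanSpace ℝ (Fin d)),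
      (inner ℝ (v - v') (gradient U v - gradient U v') : ℝ) ≥ ‖v - v'‖ ^ 2 := by
  intro v v'
  rw [grad_eq_14 U hU v, grad_eq_14 U hU v', ge_iff_le, WithLp.prod_norm_sq_eq_of_L2]
  simp only [WithLp.prod_inner_apply, WithLp.ofLp_fst, WithLp.ofLp_snd, WithLp.equiv_symm_apply, WithLp.toLp_fst, WithLp.toLp_snd,
    WithLp.sub_fst, WithLp.sub_snd, inner_sub_left, inner_sub_right, inner_add_right,
    real_inner_smul_right, ← real_inner_self_eq_norm_sq]
  rw [real_inner_comm v.fst v'.fst, real_inner_comm v.snd v'.snd, real_inner_comm v.fst v.snd,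
    real_inner_comm v.fst v'.snd, real_inner_comm v'.fst v.snd, real_inner_comm v'.fst v'.snd]
  have hA : (0:ℝ) ≤ inner ℝ v.fst v.fst := real_inner_self_nonneg
  have hA' : (0:ℝ) ≤ inner ℝ v'.fst v'.fst := real_inner_self_nonneg
  have hB : (0:ℝ) ≤ inner ℝ v.snd v.snd := real_inner_self_nonneg
  have hB' : (0:ℝ) ≤ inner ℝ v'.snd v'.snd := real_inner_self_nonneg
  have hu : (0:ℝ) ≤ inner ℝ v.fst v.fst - 2 * inner ℝ v.fst v'.fst + inner ℝ v'.fst v'.fst := by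
    have h := real_inner_self_nonneg (x := v.fst - v'.fst)
    simp only [inner_sub_left, inner_sub_right] at h
    linarith [real_inner_comm v'.fst v.fst, h]
  have hw : (0:ℝ) ≤ inner ℝ v.snd v.snd - 2 * inner ℝ v.snd v'.snd + inner ℝ v'.snd v'.snd := by
    have h := real_inner_self_nonneg (x := v.snd - v'.snd)
    simp only [inner_sub_left, inner_sub_right] at h
    linarith [real_inner_comm v'.snd v.snd, h]
  have hR : ((inner ℝ v.fst v.snd - inner ℝ v.fst v'.snd - inner ℝ v'.fst v.snd + inner ℝ v'.fst v'.snd : ℝ)) ^ 2 ≤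
      (inner ℝ v.fst v.fst - 2 * inner ℝ v.fst v'.fst + inner ℝ v'.fst v'.fst) *
      (inner ℝ v.snd v.snd - 2 * inner ℝ v.snd v'.snd + inner ℝ v'.snd v'.snd) := by
    have h := real_inner_mul_inner_self_le (v.fst - v'.fst) (v.snd - v'.snd)
    simp only [inner_sub_left, inner_sub_right] at h
    nlinarith [h, real_inner_comm v'.fst v.fst, real_inner_comm v'.snd v.snd]
  have key := key_14aux2 (inner ℝ v.fst v.fst) (inner ℝ v'.fst v'.fst) (inner ℝ v.fst v'.fst)
    (inner ℝ v.snd v.snd) (inner ℝ v'.snd v'.snd) (inner ℝ v.snd v'.snd)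
    (inner ℝ v.fst v.snd - inner ℝ v.fst v'.snd - inner ℝ v'.fst v.snd + inner ℝ v'.fst v'.snd)
    hA hA' hB hB' hu hw hR
  nlinarith [key]
end
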